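/- arXiv:1606.06810 — 9 statements merged into one kernel-verified Lean document; each statement's English description precedes it below -/
import Mathlib

section
/- Let G be a graph on n vertices and let T be a set of t vertices of G such that every vertex in T has fewer than (n-t+2)/2 non-neighbors in G. Then G contains a strong immersion of K_t with T as the set of branch (end) vertices; moreover the immersion can be chosen so that each pair of non-adjacent vertices of T is joined by a path of length two whose internal vertex lies outside T, with all these paths pairwise edge-disjoint. -/
open SimpleGraph

/-- The number of ordered pairs of distinct non-adjacent vertices within `T`
(twice the number of missing edges of `T`). -/
noncomputable def missingPairs {V : Type*} (G : SimpleGraph V) (T : Set V) : ℕ :=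
  {p : V × V | p.1 ∈ T ∧ p.2 ∈ T ∧ p.1 ≠ p.2 ∧ ¬ G.Adj p.1 p.2}.ncard

/-- The number of cliques of `G`, including the empty clique. -/
noncomputable def cliqueCount {V : Type*} [Fintype V] (G : SimpleGraph V) : ℕ :=
  {s : Finset V | G.IsClique (s : Set V)}.ncard

/-- A family of pairwise edge-disjoint paths joining all pairs of distinct vertices of `T`,
with no internal vertex in `T`: a strong `K_{|T|}`-immersion with end vertices `T`. -/
def IsStrongImmersionFamily {V : Type*} (G : SimpleGraph V) (T : Finset V)
    (P : ∀ u v : V, u ∈ T → v ∈ T → u ≠ v → G.Walk u v) : Prop :=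
  (∀ (u v : V) (hu : u ∈ T) (hv : v ∈ T) (h : u ≠ v), (P u v hu hv h).IsPath) ∧
  (∀ (u v : V) (hu : u ∈ T) (hv : v ∈ T) (h : u ≠ v),
    ∀ w ∈ (P u v hu hv h).support, w ∈ T → w = u ∨ w = v) ∧
  (∀ (u v : V) (hu : u ∈ T) (hv : v ∈ T) (h : u ≠ v)
    (u' v' : V) (hu' : u' ∈ T) (hv' : v' ∈ T) (h' : u' ≠ v'), s(u, v) ≠ s(u', v') →
    ∀ e ∈ (P u v hu hv h).edges, e ∉ (P u' v' hu' hv' h').edges)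

/-- A family of pairwise edge-disjoint paths joining all pairs of distinct vertices of `T`:
a weak `K_{|T|}`-immersion with end vertices `T`. -/
def IsWeakImmersionFamily {V : Type*} (G : SimpleGraph V) (T : Finset V)
    (P : ∀ u v : V, u ∈ T → v ∈ T → u ≠ v → G.Walk u v) : Prop :=
  (∀ (u v : V) (hu : u ∈ T) (hv : v ∈ T) (h : u ≠ v), (P u v hu hv h).IsPath) ∧
  (∀ (u v : V) (hu : u ∈ T) (hv : v ∈ T) (h : u ≠ v)
    (u' v' : V) (hu' : u' ∈ T) (hv' : v' ∈ T) (h' : u' ≠ v'), s(u, v) ≠ s(u', v') →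
    ∀ e ∈ (P u v hu hv h).edges, e ∉ (P u' v' hu' hv' h').edges)

/-- A family of internally vertex-disjoint paths joining all pairs of distinct vertices of `T`,
with no internal vertex in `T`: a `K_{|T|}`-subdivision with branch vertices `T`. -/
def IsSubdivisionFamily {V : Type*} (G : SimpleGraph V) (T : Finset V)
    (P : ∀ u v : V, u ∈ T → v ∈ T → u ≠ v → G.Walk u v) : Prop :=
  (∀ (u v : V) (hu : u ∈ T) (hv : v ∈ T) (h : u ≠ v), (P u v hu hv h).IsPath) ∧
  (∀ (u v : V) (hu : u ∈ T) (hv : v ∈ T) (h : u ≠ v),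
    ∀ w ∈ (P u v hu hv h).support, w ∈ T → w = u ∨ w = v) ∧
  (∀ (u v : V) (hu : u ∈ T) (hv : v ∈ T) (h : u ≠ v)
    (u' v' : V) (hu' : u' ∈ T) (hv' : v' ∈ T) (h' : u' ≠ v'), s(u, v) ≠ s(u', v') →
    ∀ w ∈ (P u v hu hv h).support, w ≠ u → w ≠ v →
      w ∈ (P u' v' hu' hv' h').support → w = u' ∨ w = v')

/-- `G` contains a `K_k`-subdivision. -/
def HasKSubdivision {V : Type*} (G : SimpleGraph V) (k : ℕ) : Prop :=
  ∃ T : Finset V, T.card = k ∧ ∃ P, IsSubdivisionFamily G T P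

/-!
Adjacent pairs of `T` are joined by their edge; a non-adjacent pair `{u, v}` is joined through a
middle vertex `m {u, v} ∉ T` adjacent to both. Paths of different pairs can then only share an
edge when two non-edges of `T` with a common end have the same middle, so the middles form a
list colouring of the line graph of the non-edges of `T`, with the common neighbours of `u` and
`v` outside `T` as the list of `{u, v}`; a greedy colouring exists once every list is longer than
the number of conflicting non-edges. Writing `d̄` for the missing degree and `d̄_T` for the missing
degree into `T`, the non-edge `uv` conflicts with at most `(d̄_T u - 1) + (d̄_T v - 1)` others and
has at least `(n - t) - (d̄ u - d̄_T u) - (d̄ v - d̄_T v)` candidate middles, which is more because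
`d̄ u + d̄ v < n - t + 2`.
-/

open SimpleGraph Finset

theorem SimpleGraph.exists_listColoring {α β : Type*} [DecidableEq α] [DecidableEq β]
    [Nonempty β] (H : SimpleGraph α) [DecidableRel H.Adj] (s : Finset α) (L : α → Finset β)
    (hL : ∀ a ∈ s, #{b ∈ s | H.Adj a b} < #(L a)) :
    ∃ c : α → β, (∀ a ∈ s, c a ∈ L a) ∧ ∀ a ∈ s, ∀ b ∈ s, H.Adj a b → c a ≠ c b := by
  induction s using Finset.induction_on with
  | empty => exact ⟨fun _ => Classical.arbitrary β, by simp⟩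
  | @insert a s ha ih =>
    have hsub (x : α) : #{b ∈ s | H.Adj x b} ≤ #{b ∈ insert a s | H.Adj x b} :=
      card_le_card (filter_subset_filter _ (subset_insert a s))
    obtain ⟨c, hcL, hc⟩ :=
      ih fun x hx => (hsub x).trans_lt (hL x (mem_insert_of_mem hx))
    have hfree : #({b ∈ s | H.Adj a b}.image c) < #(L a) :=
      card_image_le.trans_lt ((hsub a).trans_lt (hL a (mem_insert_self a s)))
    obtain ⟨w, hwL, hwc⟩ := exists_mem_notMem_of_card_lt_card hfree
    have hw (b : α) (hb : b ∈ s) (hab : H.Adj a b) : w ≠ c b := fun h =>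
      hwc (h ▸ mem_image_of_mem c (mem_filter.2 ⟨hb, hab⟩))
    have hbne (b : α) (hb : b ∈ s) : b ≠ a := ne_of_mem_of_not_mem hb ha
    refine ⟨Function.update c a w, ?_, ?_⟩
    · intro x hx
      obtain rfl | hx := mem_insert.1 hx
      · simpa using hwL
      · simpa [hbne x hx] using hcL x hx
    · intro x hx y hy hxy
      rcases mem_insert.1 hx with rfl | hxs <;> rcases mem_insert.1 hy with rfl | hys
      · exact absurd hxy H.irrefl
      · simpa [hbne y hys] using hw y hys hxy
      · simpa [hbne x hxs] using (hw x hxs hxy.symm).symm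
      · simpa [hbne x hxs, hbne y hys] using hc x hxs y hys hxy

def meetGraph (V : Type*) : SimpleGraph (Sym2 V) where
  Adj e f := e ≠ f ∧ ∃ x, x ∈ e ∧ x ∈ f
  symm := ⟨fun _ _ h => ⟨h.1.symm, let ⟨x, hx, hx'⟩ := h.2; ⟨x, hx', hx⟩⟩⟩
  loopless := ⟨fun _ h => h.1 rfl⟩

section

variable {V : Type*} [DecidableEq V] (G : SimpleGraph V) [DecidableRel G.Adj] (T : Finset V)

def missingEdges : Finset (Sym2 V) := {e ∈ T.sym2 | e ∈ Gᶜ.edgeSet}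

structure IsMiddleChoice (m : Sym2 V → V) : Prop where
  notMem : ∀ e ∈ missingEdges G T, m e ∉ T
  adj : ∀ e ∈ missingEdges G T, ∀ x ∈ e, G.Adj x (m e)
  ne_of_adj : ∀ e ∈ missingEdges G T, ∀ f ∈ missingEdges G T, (meetGraph V).Adj e f → m e ≠ m f

def routeEdges (m : Sym2 V → V) (e : Sym2 V) : Set (Sym2 V) :=
  {f | (e ∈ G.edgeSet ∧ f = e) ∨ (e ∉ G.edgeSet ∧ ∃ x ∈ e, f = s(x, m e))}

variable {G T}

theorem mk_mem_missingEdges {u v : V} :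
    s(u, v) ∈ missingEdges G T ↔ u ∈ T ∧ v ∈ T ∧ Gᶜ.Adj u v := by
  simp [missingEdges, and_assoc]

theorem mk_mem_missingEdges_of_not_adj {u v : V} (hu : u ∈ T) (hv : v ∈ T) (huv : u ≠ v)
    (hadj : ¬ G.Adj u v) : s(u, v) ∈ missingEdges G T :=
  mk_mem_missingEdges.2 ⟨hu, hv, (compl_adj G u v).2 ⟨huv, hadj⟩⟩

section Counting

variable [Fintype V]

theorem card_missingEdges_incident {x : V} (hx : x ∈ T) :
    #{e ∈ missingEdges G T | x ∈ e} = #(Gᶜ.neighborFinset x ∩ T) := by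
  have : {e ∈ missingEdges G T | x ∈ e} = (Gᶜ.neighborFinset x ∩ T).image (s(x, ·)) := by
    ext e
    simp only [mem_filter, mem_image, mem_inter, mem_neighborFinset]
    constructor
    · rintro ⟨he, hxe⟩
      obtain ⟨y, rfl⟩ := Sym2.mem_iff_exists.1 hxe
      obtain ⟨-, hy, hxy⟩ := mk_mem_missingEdges.1 he
      exact ⟨y, ⟨hxy, hy⟩, rfl⟩
    · rintro ⟨y, ⟨hxy, hy⟩, rfl⟩
      exact ⟨mk_mem_missingEdges.2 ⟨hx, hy, hxy⟩, Sym2.mem_mk_left x y⟩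
  rw [this, card_image_of_injective _ fun _ _ => Sym2.congr_right.1]

theorem card_meetGraph_adj_add_two_le [DecidableRel (meetGraph V).Adj] {u v : V}
    (he : s(u, v) ∈ missingEdges G T) :
    #{f ∈ missingEdges G T | (meetGraph V).Adj s(u, v) f} + 2 ≤
      #(Gᶜ.neighborFinset u ∩ T) + #(Gᶜ.neighborFinset v ∩ T) := by
  obtain ⟨hu, hv, huv⟩ := mk_mem_missingEdges.1 he
  have hsub : {f ∈ missingEdges G T | (meetGraph V).Adj s(u, v) f} ⊆
      ({f ∈ missingEdges G T | u ∈ f}.erase s(u, v)) ∪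
        ({f ∈ missingEdges G T | v ∈ f}.erase s(u, v)) := by
    intro f hf
    obtain ⟨hfs, hne, x, hxe, hxf⟩ := mem_filter.1 hf
    rcases Sym2.mem_iff.1 hxe with rfl | rfl
    · exact mem_union_left _ (mem_erase.2 ⟨hne.symm, mem_filter.2 ⟨hfs, hxf⟩⟩)
    · exact mem_union_right _ (mem_erase.2 ⟨hne.symm, mem_filter.2 ⟨hfs, hxf⟩⟩)
  have hcard := (card_le_card hsub).trans (card_union_le _ _)
  rw [card_erase_of_mem (mem_filter.2 ⟨he, Sym2.mem_mk_left u v⟩),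
    card_erase_of_mem (mem_filter.2 ⟨he, Sym2.mem_mk_right u v⟩),
    card_missingEdges_incident hu, card_missingEdges_incident hv] at hcard
  have hu' : 0 < #(Gᶜ.neighborFinset u ∩ T) := card_pos.2 ⟨v, by simp [hv, huv]⟩
  have hv' : 0 < #(Gᶜ.neighborFinset v ∩ T) := card_pos.2 ⟨u, by simp [hu, huv.symm]⟩
  omega

theorem card_compl_le_card_commonNeighbors_compl_add {u v : V} (hu : u ∈ T) (hv : v ∈ T) :
    #Tᶜ ≤ #{w ∈ Tᶜ | G.Adj u w ∧ G.Adj v w} + #(Gᶜ.neighborFinset u \ T) +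
      #(Gᶜ.neighborFinset v \ T) := by
  have hsub : Tᶜ ⊆ {w ∈ Tᶜ | G.Adj u w ∧ G.Adj v w} ∪ (Gᶜ.neighborFinset u \ T) ∪
      (Gᶜ.neighborFinset v \ T) := by
    intro w hw
    have hwT : w ∉ T := mem_compl.1 hw
    have hne (x : V) (hx : x ∈ T) : x ≠ w := ne_of_mem_of_not_mem hx hwT
    by_cases hvw : G.Adj v w
    · by_cases huw : G.Adj u w
      · simp [hwT, huw, hvw]
      · simp [hwT, huw, hne u hu]
    · simp [hwT, hvw, hne v hv]
  exact (card_le_card hsub).trans ((card_union_le _ _).trans (by grw [card_union_le]))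

theorem card_meetGraph_adj_lt_card_commonNeighbors_compl [DecidableRel (meetGraph V).Adj]
    (hdeg : ∀ v ∈ T, 2 * Gᶜ.degree v + #T < Fintype.card V + 2) {u v : V}
    (he : s(u, v) ∈ missingEdges G T) :
    #{f ∈ missingEdges G T | (meetGraph V).Adj s(u, v) f} <
      #{w ∈ Tᶜ | G.Adj u w ∧ G.Adj v w} := by
  obtain ⟨hu, hv, -⟩ := mk_mem_missingEdges.1 he
  have hconflicts := card_meetGraph_adj_add_two_le he
  have hcandidates := card_compl_le_card_commonNeighbors_compl_add (G := G) hu hv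
  have hsplit_u := card_inter_add_card_sdiff (Gᶜ.neighborFinset u) T
  have hsplit_v := card_inter_add_card_sdiff (Gᶜ.neighborFinset v) T
  rw [card_neighborFinset_eq_degree] at hsplit_u hsplit_v
  rw [card_compl] at hcandidates
  have hdeg_u := hdeg u hu
  have hdeg_v := hdeg v hv
  have hT := card_le_univ T
  omega

theorem exists_isMiddleChoice (hdeg : ∀ v ∈ T, 2 * Gᶜ.degree v + #T < Fintype.card V + 2) :
    ∃ m : Sym2 V → V, IsMiddleChoice G T m := by
  classical
  rcases isEmpty_or_nonempty V with hV | hV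
  · exact ⟨fun e => e.out.1, ⟨fun e _ => isEmptyElim e.out.1, fun e _ => isEmptyElim e.out.1,
      fun e _ => isEmptyElim e.out.1⟩⟩
  obtain ⟨m, hmL, hm⟩ := (meetGraph V).exists_listColoring (missingEdges G T)
    (fun e => {w ∈ Tᶜ | ∀ x ∈ e, G.Adj x w}) fun e he => by
      induction e using Sym2.ind with
      | h u v => simpa only [Sym2.forall_mem_pair] using
          card_meetGraph_adj_lt_card_commonNeighbors_compl hdeg he
  exact ⟨m, ⟨fun e he => mem_compl.1 (mem_filter.1 (hmL e he)).1,
    fun e he => (mem_filter.1 (hmL e he)).2, hm⟩⟩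

end Counting

variable {m : Sym2 V → V}

theorem disjoint_routeEdges (hm : IsMiddleChoice G T m) {u v u' v' : V}
    (hu : u ∈ T) (hv : v ∈ T) (huv : u ≠ v) (hu' : u' ∈ T) (hv' : v' ∈ T) (huv' : u' ≠ v')
    (hne : s(u, v) ≠ s(u', v')) :
    Disjoint (routeEdges G m s(u, v)) (routeEdges G m s(u', v')) := by
  have hmiss := mk_mem_missingEdges_of_not_adj (G := G) hu hv huv
  have hmiss' := mk_mem_missingEdges_of_not_adj (G := G) hu' hv' huv'
  have hT : ∀ y ∈ s(u, v), y ∈ T := Sym2.forall_mem_pair.2 ⟨hu, hv⟩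
  have hT' : ∀ y ∈ s(u', v'), y ∈ T := Sym2.forall_mem_pair.2 ⟨hu', hv'⟩
  rw [Set.disjoint_left]
  rintro f (⟨-, rfl⟩ | ⟨hna, x, hx, rfl⟩) (⟨-, hf'⟩ | ⟨hna', x', hx', hf'⟩)
  · exact hne hf'
  · exact hm.notMem _ (hmiss' hna') (hT _ (hf' ▸ Sym2.mem_mk_right _ _))
  · exact hm.notMem _ (hmiss hna) (hT' _ (hf' ▸ Sym2.mem_mk_right _ _))
  · rcases Sym2.eq_iff.1 hf' with ⟨rfl, hmid⟩ | ⟨hxm, -⟩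
    · exact hm.ne_of_adj _ (hmiss hna) _ (hmiss' hna') ⟨hne, x, hx, hx'⟩ hmid
    · exact hm.notMem _ (hmiss' hna') (hxm ▸ hT x hx)

theorem exists_path_edges_subset_routeEdges (hm : IsMiddleChoice G T m) {u v : V} (hu : u ∈ T)
    (hv : v ∈ T) (huv : u ≠ v) :
    ∃ p : G.Walk u v, p.IsPath ∧ (∀ w ∈ p.support, w ∈ T → w = u ∨ w = v) ∧
      (∀ f ∈ p.edges, f ∈ routeEdges G m s(u, v)) ∧ (¬ G.Adj u v → p.length = 2) := by
  by_cases hadj : G.Adj u v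
  · refine ⟨hadj.toWalk, by simp [huv], by simp, ?_, fun h => absurd hadj h⟩
    simp [routeEdges, hadj]
  have he := mk_mem_missingEdges_of_not_adj hu hv huv hadj
  have hwT := hm.notMem _ he
  have huw : G.Adj u (m s(u, v)) := hm.adj _ he u (Sym2.mem_mk_left u v)
  have hwv : G.Adj (m s(u, v)) v := (hm.adj _ he v (Sym2.mem_mk_right u v)).symm
  refine ⟨.cons huw (.cons hwv .nil), ?_, ?_, ?_, fun _ => rfl⟩
  · simp [huv, huw.ne, hwv.ne]
  · simp only [Walk.support_cons, Walk.support_nil, List.mem_cons]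
    rintro w (rfl | rfl | rfl | h) hw
    · exact Or.inl rfl
    · exact absurd hw hwT
    · exact Or.inr rfl
    · simp at h
  · simp only [Walk.edges_cons, Walk.edges_nil, List.mem_cons]
    rintro f (rfl | rfl | h)
    · exact Or.inr ⟨hadj, u, Sym2.mem_mk_left u v, rfl⟩
    · exact Or.inr ⟨hadj, v, Sym2.mem_mk_right u v, Sym2.eq_swap⟩
    · simp at h

end

theorem immersion_with_prescribed_ends {V : Type*} [Fintype V] [DecidableEq V]
    (G : SimpleGraph V) [DecidableRel G.Adj] (n t : ℕ)
    (hn : Fintype.card V = n) (T : Finset V) (hT : T.card = t)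
    (hdeg : ∀ v ∈ T, 2 * Gᶜ.degree v + t < n + 2) :
    ∃ P : ∀ u v : V, u ∈ T → v ∈ T → u ≠ v → G.Walk u v,
      IsStrongImmersionFamily G T P ∧
      ∀ (u v : V) (hu : u ∈ T) (hv : v ∈ T) (h : u ≠ v), ¬ G.Adj u v →
        (P u v hu hv h).length = 2 ∧
        ∀ w ∈ (P u v hu hv h).support, w ≠ u → w ≠ v → w ∉ T := by
  subst hn hT
  obtain ⟨m, hm⟩ := exists_isMiddleChoice hdeg
  choose P hpath hends hroute hlen using
    fun u v (hu : u ∈ T) (hv : v ∈ T) (huv : u ≠ v) =>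
      exists_path_edges_subset_routeEdges hm hu hv huv
  refine ⟨P, ⟨hpath, hends, ?_⟩, fun u v hu hv huv hadj => ⟨hlen u v hu hv huv hadj, ?_⟩⟩
  · intro u v hu hv huv u' v' hu' hv' huv' hne f hf hf'
    exact Set.disjoint_left.1 (disjoint_routeEdges hm hu hv huv hu' hv' huv' hne)
      (hroute u v hu hv huv f hf) (hroute u' v' hu' hv' huv' f hf')
  · exact fun w hw hwu hwv hwT => (hends u v hu hv huv w hw hwT).elim hwu hwv
end

section
/- If G is a graph on n vertices in which every vertex has fewer than (n-t+2)/2 non-neighbors, then G contains a strong immersion of K_t. -/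
open SimpleGraph

/-! Fix any `t` vertices `T`. Join each adjacent pair of `T` by its edge and each non-adjacent
pair `u, v` by a path `u w v` through a common neighbour `w ∉ T`. These paths are edge-disjoint as
soon as non-edges sharing an end vertex get different middle vertices, i.e. the middle vertices
properly color the line graph of the non-edges inside `T`, each non-edge choosing from its common
neighbours outside `T`. For the non-edge `uv` there are at least `(n - t) - d̄ₒ(u) - d̄ₒ(v)` such
candidates (`d̄ₒ` counting non-neighbours outside `T`) and at most `d̄ₜ(u) - 1 + d̄ₜ(v) - 1`
conflicting non-edges (`d̄ₜ` counting those inside `T`). Since `d̄(u) + d̄(v) < n - t + 2`, every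
list is longer than the degree in the line graph, so a greedy list coloring exists. -/

open Finset

namespace SimpleGraph

theorem exists_listColoring_of_degree_lt_card {α β : Type*} [Fintype α] (H : SimpleGraph α)
    [H.LocallyFinite] (L : α → Finset β) (hL : ∀ a, H.degree a < #(L a)) :
    ∃ c : α → β, (∀ a, c a ∈ L a) ∧ ∀ a b, H.Adj a b → c a ≠ c b := by
  classical
  suffices ∀ s : Finset α, ∃ c : α → β, (∀ a, c a ∈ L a) ∧
      ∀ a ∈ s, ∀ b ∈ s, H.Adj a b → c a ≠ c b by
    obtain ⟨c, hcL, hc⟩ := this univ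
    exact ⟨c, hcL, fun a b => hc a (mem_univ a) b (mem_univ b)⟩
  intro s
  induction s using Finset.induction_on with
  | empty =>
    have hne a : (L a).Nonempty := card_pos.mp (Nat.zero_lt_of_lt (hL a))
    exact ⟨fun a => (hne a).choose, fun a => (hne a).choose_spec, by simp⟩
  | insert a s ha ih =>
    obtain ⟨c, hcL, hc⟩ := ih
    obtain ⟨x, hxL, hx⟩ := exists_mem_notMem_of_card_lt_card
      (card_image_le.trans_lt (hL a) : #((H.neighborFinset a).image c) < #(L a))
    have hx' b (hb : b ∈ s) (hab : H.Adj a b) : x ≠ Function.update c a x b := by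
      rw [Function.update_of_ne (ne_of_mem_of_not_mem hb ha)]
      rintro rfl
      exact hx (mem_image_of_mem c ((mem_neighborFinset _ _ _).mpr hab))
    refine ⟨Function.update c a x, fun b => ?_, ?_⟩
    · rcases eq_or_ne b a with rfl | hb
      · simpa using hxL
      · simpa [hb] using hcL b
    · intro p hp q hq hpq
      rw [mem_insert] at hp hq
      rcases hp with rfl | hp <;> rcases hq with rfl | hq
      · exact absurd hpq H.irrefl
      · simpa using hx' q hq hpq
      · simpa using (hx' p hp hpq.symm).symm
      · rw [Function.update_of_ne (ne_of_mem_of_not_mem hp ha),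
          Function.update_of_ne (ne_of_mem_of_not_mem hq ha)]
        exact hc p hp q hq hpq

theorem degree_lineGraph_add_two_le {V : Type*} [Fintype V] [DecidableEq V] (K : SimpleGraph V)
    [DecidableRel K.Adj] {u v : V} (h : s(u, v) ∈ K.edgeSet)
    [Fintype (K.lineGraph.neighborSet ⟨s(u, v), h⟩)] :
    K.lineGraph.degree ⟨s(u, v), h⟩ + 2 ≤ K.degree u + K.degree v := by
  have hmem x (hx : x ∈ s(u, v)) : s(u, v) ∈ K.incidenceFinset x := by
    rw [mem_incidenceFinset]
    exact ⟨h, hx⟩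
  have hsub : (K.lineGraph.neighborFinset ⟨s(u, v), h⟩).map (Function.Embedding.subtype _) ⊆
      (K.incidenceFinset u).erase s(u, v) ∪ (K.incidenceFinset v).erase s(u, v) := by
    intro e' he'
    obtain ⟨⟨e, he⟩, hadj, rfl⟩ := mem_map.mp he'
    obtain ⟨hne, x, hx, hxe⟩ := lineGraph_adj_iff_exists.mp ((mem_neighborFinset _ _ _).mp hadj)
    have hne' : e ≠ s(u, v) := fun h' => hne (Subtype.ext h'.symm)
    rcases Sym2.mem_iff.mp hx with rfl | rfl
    · exact mem_union_left _ (mem_erase.mpr ⟨hne', (mem_incidenceFinset _ _ _).mpr ⟨he, hxe⟩⟩)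
    · exact mem_union_right _ (mem_erase.mpr ⟨hne', (mem_incidenceFinset _ _ _).mpr ⟨he, hxe⟩⟩)
  have hcard := (card_le_card hsub).trans (card_union_le _ _)
  rw [card_map, card_erase_of_mem (hmem u (Sym2.mem_mk_left u v)),
    card_erase_of_mem (hmem v (Sym2.mem_mk_right u v)), card_incidenceFinset_eq_degree,
    card_incidenceFinset_eq_degree] at hcard
  have hu := card_pos.mpr ⟨_, hmem u (Sym2.mem_mk_left u v)⟩
  have hv := card_pos.mpr ⟨_, hmem v (Sym2.mem_mk_right u v)⟩
  rw [card_incidenceFinset_eq_degree] at hu hv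
  rw [degree]
  omega

end SimpleGraph

theorem Sym2.eq_and_eq_of_mk_eq_of_mem_of_notMem {α : Type*} {S : Set α} {x m x' m' : α}
    (h : s(x, m) = s(x', m')) (hx : x ∈ S) (hm' : m' ∉ S) : x = x' ∧ m = m' := by
  rcases Sym2.eq_iff.mp h with h | ⟨rfl, -⟩
  · exact h
  · exact absurd hx hm'

section MissingGraph

variable {V : Type*}

def missingGraph (G : SimpleGraph V) (T : Finset V) : SimpleGraph V where
  Adj u v := u ∈ T ∧ v ∈ T ∧ Gᶜ.Adj u v
  symm := ⟨fun _ _ h => ⟨h.2.1, h.1, h.2.2.symm⟩⟩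
  loopless := ⟨fun _ h => h.2.2.ne rfl⟩

@[simp]
theorem missingGraph_adj {G : SimpleGraph V} {T : Finset V} {u v : V} :
    (missingGraph G T).Adj u v ↔ u ∈ T ∧ v ∈ T ∧ Gᶜ.Adj u v :=
  Iff.rfl

instance (G : SimpleGraph V) [DecidableEq V] [DecidableRel G.Adj] (T : Finset V) :
    DecidableRel (missingGraph G T).Adj :=
  fun u v => inferInstanceAs (Decidable (u ∈ T ∧ v ∈ T ∧ Gᶜ.Adj u v))

def middleCandidates [Fintype V] [DecidableEq V] (G : SimpleGraph V) [DecidableRel G.Adj]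
    (T : Finset V) (e : Sym2 V) : Finset V :=
  {w ∈ Tᶜ | ∀ x ∈ e, G.Adj x w}

theorem mem_middleCandidates [Fintype V] [DecidableEq V] {G : SimpleGraph V} [DecidableRel G.Adj]
    {T : Finset V} {e : Sym2 V} {w : V} :
    w ∈ middleCandidates G T e ↔ w ∉ T ∧ ∀ x ∈ e, G.Adj x w := by
  simp [middleCandidates]

section Counting

variable [Fintype V] [DecidableEq V] (G : SimpleGraph V) [DecidableRel G.Adj] {T : Finset V}

theorem degree_missingGraph {u : V} (hu : u ∈ T) :
    (missingGraph G T).degree u = #(Gᶜ.neighborFinset u ∩ T) := by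
  rw [degree]
  congr 1
  ext w
  simp [hu, and_comm]

theorem card_compl_le_card_middleCandidates {u v : V} (hu : u ∈ T) (hv : v ∈ T) :
    #Tᶜ ≤ #(middleCandidates G T s(u, v)) + #(Gᶜ.neighborFinset u \ T) +
      #(Gᶜ.neighborFinset v \ T) := by
  have hsub : Tᶜ ⊆ middleCandidates G T s(u, v) ∪ (Gᶜ.neighborFinset u \ T) ∪
      (Gᶜ.neighborFinset v \ T) := by
    intro w hw
    have hwT := mem_compl.mp hw
    by_cases hwu : Gᶜ.Adj u w
    · simp [hwu, hwT]
    by_cases hwv : Gᶜ.Adj v w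
    · simp [hwv, hwT]
    have hadj {x} (hx : x ∈ T) (hxw : ¬Gᶜ.Adj x w) : G.Adj x w := by
      by_contra h
      exact hxw ⟨ne_of_mem_of_not_mem hx hwT, h⟩
    simp [mem_middleCandidates, hwT, hadj hu hwu, hadj hv hwv]
  exact (card_le_card hsub).trans ((card_union_le _ _).trans (by gcongr; exact card_union_le _ _))

theorem degree_lineGraph_lt_card_middleCandidates
    (hdeg : ∀ v, 2 * Gᶜ.degree v + #T < Fintype.card V + 2)
    [(missingGraph G T).lineGraph.LocallyFinite] (e : (missingGraph G T).edgeSet) :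
    (missingGraph G T).lineGraph.degree e < #(middleCandidates G T e) := by
  obtain ⟨⟨u, v⟩, hz⟩ := e
  obtain ⟨hu, hv, -⟩ := (mem_edgeSet _).mp hz
  change _ < #(middleCandidates G T s(u, v))
  have hline := (missingGraph G T).degree_lineGraph_add_two_le hz
  have hcand := card_compl_le_card_middleCandidates G hu hv
  have hsplit (x : V) : #(Gᶜ.neighborFinset x \ T) + #(Gᶜ.neighborFinset x ∩ T) = Gᶜ.degree x :=
    card_sdiff_add_card_inter _ _
  have hTc := card_compl_add_card T
  rw [degree_missingGraph G hu, degree_missingGraph G hv] at hline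
  linarith [hsplit u, hsplit v, hdeg u, hdeg v]

end Counting

section Routing

variable [Fintype V] [DecidableEq V] {G : SimpleGraph V} [DecidableRel G.Adj] {T : Finset V}
  {c : (missingGraph G T).edgeSet → V}
  (hc : ∀ e : (missingGraph G T).edgeSet, c e ∈ middleCandidates G T e)

def route {u v : V} (hu : u ∈ T) (hv : v ∈ T) (huv : u ≠ v) : G.Walk u v :=
  if h : G.Adj u v then h.toWalk
  else
    have hm := mem_middleCandidates.mp (hc ⟨s(u, v), hu, hv, huv, h⟩)
    Walk.cons (hm.2 u (Sym2.mem_mk_left u v)) (hm.2 v (Sym2.mem_mk_right u v)).symm.toWalk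

variable {u v : V} (hu : u ∈ T) (hv : v ∈ T) (huv : u ≠ v)

theorem route_isPath : (route hc hu hv huv).IsPath := by
  unfold route
  split_ifs with h
  · exact Walk.IsPath.mk' (by simp [huv])
  · have hm := mem_middleCandidates.mp (hc ⟨s(u, v), hu, hv, huv, h⟩)
    have hum : u ≠ c ⟨s(u, v), hu, hv, huv, h⟩ := ne_of_mem_of_not_mem hu hm.1
    have hvm : v ≠ c ⟨s(u, v), hu, hv, huv, h⟩ := ne_of_mem_of_not_mem hv hm.1
    exact Walk.IsPath.mk' (by simp [huv, hum, hvm.symm])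

theorem eq_or_eq_of_mem_support_route {w : V} (hw : w ∈ (route hc hu hv huv).support)
    (hwT : w ∈ T) : w = u ∨ w = v := by
  unfold route at hw
  split_ifs at hw with h
  · simpa using hw
  · have hm := mem_middleCandidates.mp (hc ⟨s(u, v), hu, hv, huv, h⟩)
    simp only [Walk.support_cons, Adj.toWalk, Walk.support_nil, List.mem_cons] at hw
    rcases hw with rfl | rfl | rfl | hw
    · exact .inl rfl
    · exact absurd hwT hm.1
    · exact .inr rfl
    · simp at hw

theorem mem_edges_route {d : Sym2 V} (hd : d ∈ (route hc hu hv huv).edges) :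
    d = s(u, v) ∨
      ∃ h : s(u, v) ∈ (missingGraph G T).edgeSet, ∃ x ∈ s(u, v), d = s(x, c ⟨_, h⟩) := by
  unfold route at hd
  split_ifs at hd with h
  · exact Or.inl (by simpa using hd)
  · right
    refine ⟨⟨hu, hv, huv, h⟩, ?_⟩
    obtain rfl | rfl : d = s(u, _) ∨ d = s(_, v) := by simpa using hd
    · exact ⟨u, Sym2.mem_mk_left u v, rfl⟩
    · exact ⟨v, Sym2.mem_mk_right u v, Sym2.eq_swap⟩

theorem notMem_edges_route_of_mem_edges_route
    (hproper : ∀ e e', (missingGraph G T).lineGraph.Adj e e' → c e ≠ c e')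
    {u' v' : V} (hu' : u' ∈ T) (hv' : v' ∈ T) (huv' : u' ≠ v') (hne : s(u, v) ≠ s(u', v'))
    {d : Sym2 V} (hd : d ∈ (route hc hu hv huv).edges) : d ∉ (route hc hu' hv' huv').edges := by
  intro hd'
  have hcT e : c e ∉ T := (mem_middleCandidates.mp (hc e)).1
  have hT {a b y : V} (ha : a ∈ T) (hb : b ∈ T) (hy : y ∈ s(a, b)) : y ∈ T := by
    rcases Sym2.mem_iff.mp hy with rfl | rfl <;> assumption
  rcases mem_edges_route hc hu hv huv hd with rfl | ⟨he, x, hx, rfl⟩ <;>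
    rcases mem_edges_route hc hu' hv' huv' hd' with hd' | ⟨he', x', hx', hd'⟩
  · exact hne hd'
  · exact hcT _ (hT hu hv (by rw [hd']; exact Sym2.mem_mk_right _ _))
  · exact hcT _ (hT hu' hv' (by rw [← hd']; exact Sym2.mem_mk_right _ _))
  · obtain ⟨rfl, hcc⟩ := Sym2.eq_and_eq_of_mk_eq_of_mem_of_notMem hd' (hT hu hv hx) (hcT _)
    exact hproper ⟨_, he⟩ ⟨_, he'⟩
      (lineGraph_adj_iff_exists.mpr ⟨fun h => hne (congrArg Subtype.val h), x, hx, hx'⟩) hcc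

theorem isStrongImmersionFamily_route
    (hproper : ∀ e e', (missingGraph G T).lineGraph.Adj e e' → c e ≠ c e') :
    IsStrongImmersionFamily G T (fun _ _ hu hv huv => route hc hu hv huv) :=
  ⟨fun _ _ hu hv huv => route_isPath hc hu hv huv,
    fun _ _ hu hv huv _ hw hwT => eq_or_eq_of_mem_support_route hc hu hv huv hw hwT,
    fun _ _ hu hv huv _ _ hu' hv' huv' hne _ hd =>
      notMem_edges_route_of_mem_edges_route hc hu hv huv hproper hu' hv' huv' hne hd⟩

end Routing

end MissingGraph

theorem immersion_of_small_missing_degree {V : Type*} [Fintype V] [DecidableEq V]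
    (G : SimpleGraph V) [DecidableRel G.Adj] (n t : ℕ)
    (hn : Fintype.card V = n) (ht : t ≤ n)
    (hdeg : ∀ v : V, 2 * Gᶜ.degree v + t < n + 2) :
    ∃ T : Finset V, T.card = t ∧
      ∃ P : ∀ u v : V, u ∈ T → v ∈ T → u ≠ v → G.Walk u v,
        IsStrongImmersionFamily G T P := by
  classical
  subst hn
  obtain ⟨T, -, rfl⟩ := exists_subset_card_eq (show t ≤ #(univ : Finset V) by rwa [card_univ])
  obtain ⟨c, hcL, hc⟩ := (missingGraph G T).lineGraph.exists_listColoring_of_degree_lt_card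
    (fun e => middleCandidates G T e) (degree_lineGraph_lt_card_middleCandidates G hdeg)
  exact ⟨T, rfl, _, isStrongImmersionFamily_route hcL hc⟩
end

section
/- For every n ≥ t-2 there exists a graph on n vertices with exactly 2^{t-2}·(n-t+3) cliques (including the empty clique) that contains no weak K_t-immersion. -/
open SimpleGraph

/-!
Take `G` to be the complete split graph with clique part `K` of size `t - 2`. A clique of `G`
has at most one vertex outside `K`, so cliques correspond to pairs (subset of `K`, at most one of
the `n - t + 2` other vertices). In a weak immersion with terminal set `T`, the paths from a
terminal `u` to the other terminals start with pairwise distinct edges, so `|T| ≤ deg u + 1`;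
some terminal lies outside `K` unless `|T| ≤ t - 2`, and such a vertex has degree `t - 2`.
-/

open Finset

variable {V : Type*}

lemma Finset.card_filter_powerset_card_le_one [DecidableEq V] (S : Finset V) :
    #{B ∈ S.powerset | #B ≤ 1} = #S + 1 := by
  have : {B ∈ S.powerset | #B ≤ 1} = S.powersetCard 0 ∪ S.powersetCard 1 := by
    ext B
    simp only [mem_filter, mem_powerset, mem_union, mem_powersetCard,
      Nat.le_one_iff_eq_zero_or_eq_one, and_or_left]
  rw [this, card_union_of_disjoint (S.pairwise_disjoint_powersetCard zero_ne_one),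
    card_powersetCard, card_powersetCard, Nat.choose_zero_right, Nat.choose_one_right, add_comm]

lemma Finset.card_filter_card_sdiff_le_one [Fintype V] [DecidableEq V] (K : Finset V) :
    #{s : Finset V | #(s \ K) ≤ 1} = 2 ^ #K * (#Kᶜ + 1) := by
  rw [← card_powerset K, ← card_filter_powerset_card_le_one, ← card_product]
  refine card_nbij' (fun s => (s ∩ K, s \ K)) (fun p => p.1 ∪ p.2) ?_ ?_ ?_ ?_
  · intro s hs
    simp_all [subset_iff]
  · rintro ⟨A, B⟩ hp
    simp only [mem_coe, mem_product, mem_powerset, mem_filter] at hp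
    obtain ⟨hA, hBK, hB⟩ := hp
    simp only [coe_filter, Set.mem_ofPred_eq, mem_univ, true_and]
    rwa [union_sdiff_distrib, sdiff_eq_empty_iff_subset.2 hA, empty_union,
      sdiff_eq_self_of_disjoint (subset_compl_iff_disjoint_right.1 hBK)]
  · intro s _
    ext x
    simp only [mem_union, mem_inter, mem_sdiff]
    tauto
  · rintro ⟨A, B⟩ hp
    simp only [mem_coe, mem_product, mem_powerset, mem_filter, subset_iff, mem_compl] at hp
    ext x <;> simp only [mem_union, mem_inter, mem_sdiff] <;> grind

namespace SimpleGraph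

def completeSplitGraph (K : Finset V) : SimpleGraph V :=
  fromRel fun u _ => u ∈ K

variable {K : Finset V} {u v : V}

@[simp]
lemma completeSplitGraph_adj : (completeSplitGraph K).Adj u v ↔ u ≠ v ∧ (u ∈ K ∨ v ∈ K) :=
  fromRel_adj ..

lemma isClique_completeSplitGraph_iff [DecidableEq V] {s : Finset V} :
    (completeSplitGraph K).IsClique (s : Set V) ↔ #(s \ K) ≤ 1 := by
  rw [card_le_one]
  simp only [IsClique, Set.Pairwise, mem_coe, completeSplitGraph_adj, mem_sdiff]
  grind

lemma cliqueCount_completeSplitGraph [Fintype V] [DecidableEq V] (K : Finset V) :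
    cliqueCount (completeSplitGraph K) = 2 ^ #K * (#Kᶜ + 1) := by
  simp only [cliqueCount, isClique_completeSplitGraph_iff]
  rw [← card_filter_card_sdiff_le_one, ← Set.ncard_coe_finset, coe_filter]
  simp

lemma neighborSet_completeSplitGraph_of_notMem (hu : u ∉ K) :
    (completeSplitGraph K).neighborSet u = K := by
  ext v
  simp only [mem_neighborSet, completeSplitGraph_adj, mem_coe]
  grind

end SimpleGraph

namespace IsWeakImmersionFamily

variable {G : SimpleGraph V} {T : Finset V} {P : ∀ u v : V, u ∈ T → v ∈ T → u ≠ v → G.Walk u v}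
  {u : V}

lemma card_le_degree_add_one (hP : IsWeakImmersionFamily G T P) (hu : u ∈ T)
    [Fintype (G.neighborSet u)] : #T ≤ G.degree u + 1 := by
  classical
  let next v : V := if h : v ∈ T ∧ u ≠ v then (P u v hu h.1 h.2).snd else u
  have next_eq {v} (hv : v ∈ T.erase u) :
      next v = (P u v hu (mem_of_mem_erase hv) (ne_of_mem_erase hv).symm).snd :=
    dif_pos ⟨mem_of_mem_erase hv, (ne_of_mem_erase hv).symm⟩
  have first_edge {v} (hv : v ∈ T.erase u) :
      s(u, next v) ∈ (P u v hu (mem_of_mem_erase hv) (ne_of_mem_erase hv).symm).edges := by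
    rw [next_eq hv]
    exact Walk.mk_start_snd_mem_edges (Walk.not_nil_of_ne (ne_of_mem_erase hv).symm)
  have maps_to : Set.MapsTo next (T.erase u) (G.neighborFinset u) := by
    intro v hv
    rw [mem_coe, mem_neighborFinset, next_eq hv]
    exact Walk.adj_snd (Walk.not_nil_of_ne (ne_of_mem_erase hv).symm)
  have inj_on : Set.InjOn next (T.erase u) := by
    intro v hv w hw hvw
    by_contra hne
    refine hP.2 u v hu _ _ u w hu _ _ ?_ _ (first_edge hv) (hvw ▸ first_edge hw)
    exact hne ∘ Sym2.congr_right.1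
  have := card_le_card_of_injOn next maps_to inj_on
  rw [card_erase_of_mem hu, card_neighborFinset_eq_degree] at this
  omega

lemma card_le_card_add_one_of_completeSplitGraph {K : Finset V}
    {P : ∀ u v : V, u ∈ T → v ∈ T → u ≠ v → (completeSplitGraph K).Walk u v}
    (hP : IsWeakImmersionFamily (completeSplitGraph K) T P) : #T ≤ #K + 1 := by
  by_cases hTK : T ⊆ K
  · exact (card_le_card hTK).trans K.card.le_succ
  · obtain ⟨u, hu, huK⟩ := not_subset.1 hTK
    have hN := neighborSet_completeSplitGraph_of_notMem huK
    let _ : Fintype ((completeSplitGraph K).neighborSet u) := Fintype.ofFinset K (by simp [hN])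
    simpa only [← card_neighborSet_eq_degree, Fintype.card_ofFinset] using
      hP.card_le_degree_add_one hu

end IsWeakImmersionFamily

theorem extremal_graph_without_weak_immersion (n t : ℕ) (ht : 2 ≤ t) (hn : t - 2 ≤ n) :
    ∃ G : SimpleGraph (Fin n),
      cliqueCount G = 2 ^ (t - 2) * (n + 3 - t) ∧
      ¬ ∃ T : Finset (Fin n), T.card = t ∧
          ∃ P : ∀ u v : Fin n, u ∈ T → v ∈ T → u ≠ v → G.Walk u v,
            IsWeakImmersionFamily G T P := by
  let K : Finset (Fin n) := univ.map (Fin.castLEEmb hn)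
  have hK : #K = t - 2 := by simp [K]
  refine ⟨completeSplitGraph K, ?_, ?_⟩
  · rw [cliqueCount_completeSplitGraph, card_compl, hK, Fintype.card_fin]
    congr 1
    omega
  · rintro ⟨T, hT, P, hP⟩
    have := hP.card_le_card_add_one_of_completeSplitGraph
    omega
end

section
/- Let G be a graph on n vertices with minimum degree at least n-Δ-1, and let T be a set of t vertices of G such that the number of non-adjacent pairs within T is at most n-t-2Δ. Then G contains a subdivision of K_t whose branch vertices are exactly the vertices of T, using only edges and internally-disjoint paths of length two with internal vertices outside T. -/
open SimpleGraph

/-!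
Two vertices of `T` have at least `n - 2Δ - 2` common neighbours, of which at most `t - 2` lie
in `T`; so every missing edge of `T` has at least `n - t - 2Δ` common neighbours outside `T`, and
this is at least the number of missing edges. By Hall's theorem the missing edges can therefore be
assigned pairwise distinct such common neighbours, and the subdivision uses the edge `uv` where it
exists and the path through the vertex assigned to `uv` otherwise.
-/

open Finset

theorem Finset.exists_injective_forall_mem_of_card_le {ι α : Type*} [Fintype ι] [DecidableEq α]
    (t : ι → Finset α) (h : ∀ i, Fintype.card ι ≤ #(t i)) :
    ∃ f : ι → α, Function.Injective f ∧ ∀ i, f i ∈ t i := by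
  refine (all_card_le_biUnion_card_iff_exists_injective t).1 fun s => ?_
  obtain rfl | ⟨i, hi⟩ := s.eq_empty_or_nonempty
  · simp
  · exact (card_le_univ s).trans ((h i).trans (card_le_card (subset_biUnion_of_mem t hi)))

namespace SimpleGraph

variable {V : Type*}

def missingGraph (G : SimpleGraph V) (T : Set V) : SimpleGraph V where
  Adj u v := u ∈ T ∧ v ∈ T ∧ u ≠ v ∧ ¬ G.Adj u v
  symm := ⟨fun _ _ ⟨hu, hv, huv, h⟩ => ⟨hv, hu, huv.symm, fun h' => h h'.symm⟩⟩
  loopless := ⟨fun _ h => h.2.2.1 rfl⟩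

theorem missingPairs_eq_two_mul_ncard_edgeSet [Finite V] (G : SimpleGraph V) (T : Set V) :
    missingPairs G T = 2 * (G.missingGraph T).edgeSet.ncard := by
  classical
  have := Fintype.ofFinite V
  let dartEquiv : {p : V × V | (G.missingGraph T).Adj p.1 p.2} ≃ (G.missingGraph T).Dart :=
    { toFun p := ⟨p.1, p.2⟩, invFun d := ⟨d.toProd, d.adj⟩, left_inv _ := rfl, right_inv _ := rfl }
  rw [missingPairs, ← Nat.card_coe_set_eq]
  change Nat.card {p : V × V | (G.missingGraph T).Adj p.1 p.2} = _
  rw [Nat.card_congr dartEquiv, Nat.card_eq_fintype_card,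
    dart_card_eq_twice_card_edges, ← coe_edgeFinset, Set.ncard_coe_finset]

theorem card_le_card_inter_neighborFinset_add [Fintype V] [DecidableEq V] (G : SimpleGraph V)
    [DecidableRel G.Adj] {k : ℕ} (hdeg : ∀ v, Fintype.card V ≤ G.degree v + k) (u v : V) :
    Fintype.card V ≤ #(G.neighborFinset u ∩ G.neighborFinset v) + 2 * k := by
  have hunion := card_inter_add_card_union (G.neighborFinset u) (G.neighborFinset v)
  have hle : #(G.neighborFinset u ∪ G.neighborFinset v) ≤ Fintype.card V := card_le_univ _
  rw [card_neighborFinset_eq_degree, card_neighborFinset_eq_degree] at hunion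
  linarith [hdeg u, hdeg v]

theorem card_le_card_inter_neighborFinset_sdiff [Fintype V] [DecidableEq V] (G : SimpleGraph V)
    [DecidableRel G.Adj] {k : ℕ} (hdeg : ∀ v, Fintype.card V ≤ G.degree v + k) {T : Finset V}
    {u v : V} (hu : u ∈ T) (hv : v ∈ T) (huv : u ≠ v) :
    Fintype.card V + 2 ≤ #((G.neighborFinset u ∩ G.neighborFinset v) \ T) + #T + 2 * k := by
  have hinT : (G.neighborFinset u ∩ G.neighborFinset v) ∩ T ⊆ (T.erase u).erase v := by
    intro w hw
    simp only [mem_inter, mem_neighborFinset] at hw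
    exact mem_erase.2 ⟨hw.1.2.ne', mem_erase.2 ⟨hw.1.1.ne', hw.2⟩⟩
  have hcard : #((T.erase u).erase v) + 2 = #T := by
    rw [← card_erase_add_one hu, ← card_erase_add_one (mem_erase.2 ⟨huv.symm, hv⟩)]
  have := card_sdiff_add_card_inter (G.neighborFinset u ∩ G.neighborFinset v) T
  have := card_le_card hinT
  have := G.card_le_card_inter_neighborFinset_add hdeg u v
  omega

section ShortPath

variable {G : SimpleGraph V} [DecidableRel G.Adj] {T : Finset V}
  (f : (G.missingGraph T).edgeSet → V)
  (hadj : ∀ e : (G.missingGraph T).edgeSet, ∀ x ∈ (e : Sym2 V), G.Adj x (f e))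

def shortPath (u v : V) (hu : u ∈ T) (hv : v ∈ T) (huv : u ≠ v) : G.Walk u v :=
  if h : G.Adj u v then h.toWalk
  else
    let e : (G.missingGraph T).edgeSet := ⟨s(u, v), hu, hv, huv, h⟩
    .cons (hadj e u (Sym2.mem_mk_left u v)) (.cons (hadj e v (Sym2.mem_mk_right u v)).symm .nil)

variable {u v : V} (hu : u ∈ T) (hv : v ∈ T) (huv : u ≠ v)

theorem length_shortPath_le : (shortPath f hadj u v hu hv huv).length ≤ 2 := by
  unfold shortPath
  split_ifs <;> simp

theorem mem_support_shortPath {w : V} (hw : w ∈ (shortPath f hadj u v hu hv huv).support) :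
    w = u ∨ w = v ∨ ∃ e : (G.missingGraph T).edgeSet, (e : Sym2 V) = s(u, v) ∧ w = f e := by
  unfold shortPath at hw
  split_ifs at hw with h
  · simp only [Adj.toWalk, Walk.support_cons, Walk.support_nil, List.mem_cons,
      List.not_mem_nil, or_false] at hw
    tauto
  · simp only [Walk.support_cons, Walk.support_nil, List.mem_cons, List.not_mem_nil,
      or_false] at hw
    rcases hw with rfl | rfl | rfl
    exacts [Or.inl rfl, Or.inr (Or.inr ⟨_, rfl, rfl⟩), Or.inr (Or.inl rfl)]

variable {f} (hfT : ∀ e, f e ∉ T)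
include hfT

theorem isPath_shortPath : (shortPath f hadj u v hu hv huv).IsPath := by
  unfold shortPath
  split_ifs with h
  · simp [Walk.isPath_def, huv]
  · have hfT := hfT ⟨s(u, v), hu, hv, huv, h⟩
    have hu' : u ≠ f ⟨s(u, v), hu, hv, huv, h⟩ := fun h' => hfT (h' ▸ hu)
    have hv' : f ⟨s(u, v), hu, hv, huv, h⟩ ≠ v := fun h' => hfT (h'.symm ▸ hv)
    simp [Walk.isPath_def, huv, hu', hv']

theorem isSubdivisionFamily_shortPath (hf : Function.Injective f) :
    IsSubdivisionFamily G T (shortPath f hadj) := by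
  refine ⟨fun u v hu hv huv => isPath_shortPath hadj hu hv huv hfT, ?_, ?_⟩
  · intro u v hu hv huv w hw hwT
    rcases mem_support_shortPath f hadj hu hv huv hw with h | h | ⟨e, -, rfl⟩
    exacts [Or.inl h, Or.inr h, absurd hwT (hfT e)]
  · intro u v hu hv huv u' v' hu' hv' huv' hne w hw hwu hwv hw'
    obtain ⟨e, he, rfl⟩ := (mem_support_shortPath f hadj hu hv huv hw).resolve_left hwu
      |>.resolve_left hwv
    rcases mem_support_shortPath f hadj hu' hv' huv' hw' with h | h | ⟨e', he', hee'⟩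
    exacts [Or.inl h, Or.inr h, absurd (he.symm.trans ((congrArg _ (hf hee')).trans he')) hne]

end ShortPath

end SimpleGraph

theorem subdivision_with_prescribed_branch_vertices_general {V : Type*} [Fintype V]
    (G : SimpleGraph V) [DecidableRel G.Adj] (n t Δ : ℕ)
    (hn : Fintype.card V = n)
    (hdeg : ∀ v : V, n - Δ - 1 ≤ G.degree v)
    (T : Finset V) (hT : T.card = t)
    (hmiss : (missingPairs G ↑T : ℤ) ≤ 2 * ((n : ℤ) - t - 2 * Δ)) :
    ∃ P : ∀ u v : V, u ∈ T → v ∈ T → u ≠ v → G.Walk u v,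
      IsSubdivisionFamily G T P ∧
      ∀ (u v : V) (hu : u ∈ T) (hv : v ∈ T) (h : u ≠ v), (P u v hu hv h).length ≤ 2 := by
  classical
  let candidates (e : (G.missingGraph T).edgeSet) : Finset V :=
    {w | w ∉ T ∧ ∀ x ∈ (e : Sym2 V), G.Adj x w}
  have hcandidates : ∀ e, Fintype.card (G.missingGraph T).edgeSet ≤ #(candidates e) := by
    rintro ⟨e, he⟩
    induction e using Sym2.inductionOn with | hf u v => ?_
    have hmissing : (G.missingGraph T).Adj u v := he
    obtain ⟨hu, hv, huv, -⟩ := hmissing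
    have hcommon := G.card_le_card_inter_neighborFinset_sdiff (k := Δ + 1)
      (fun v => by have := hdeg v; omega) hu hv huv
    have hcand : candidates ⟨s(u, v), he⟩ = (G.neighborFinset u ∩ G.neighborFinset v) \ T := by
      ext w; simp [candidates, and_comm]
    have hedges := G.missingPairs_eq_two_mul_ncard_edgeSet T
    rw [hcand, ← Nat.card_eq_fintype_card, Nat.card_coe_set_eq]
    omega
  obtain ⟨f, hf, hfmem⟩ := exists_injective_forall_mem_of_card_le candidates hcandidates
  simp only [candidates, mem_filter, mem_univ, true_and] at hfmem
  have hadj e := (hfmem e).2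
  exact ⟨shortPath f hadj, isSubdivisionFamily_shortPath hadj (fun e => (hfmem e).1) hf,
    fun u v hu hv huv => length_shortPath_le f hadj hu hv huv⟩

theorem subdivision_with_prescribed_branch_vertices {V : Type*} [Fintype V] [DecidableEq V]
    (G : SimpleGraph V) [DecidableRel G.Adj] (n t Δ : ℕ)
    (hn : Fintype.card V = n)
    (hdeg : ∀ v : V, n - Δ - 1 ≤ G.degree v)
    (T : Finset V) (hT : T.card = t)
    (hmiss : (missingPairs G ↑T : ℤ) ≤ 2 * ((n : ℤ) - t - 2 * Δ)) :
    ∃ P : ∀ u v : V, u ∈ T → v ∈ T → u ≠ v → G.Walk u v,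
      IsSubdivisionFamily G T P ∧
      ∀ (u v : V) (hu : u ∈ T) (hv : v ∈ T) (h : u ≠ v), (P u v hu hv h).length ≤ 2 :=
  subdivision_with_prescribed_branch_vertices_general G n t Δ hn hdeg T hT hmiss
end

section
/- Let G be a graph on n vertices with minimum degree at least n-Δ-1. Define t(G) to be the maximum t such that G has a t-vertex subset with at most n-t missing edges, and σ(G) the largest h such that G contains a K_h-subdivision. Then t(G) - Δ ≤ σ(G) ≤ t(G). -/
open SimpleGraph

/-- The parameter `t(G)`: the largest `t` such that some `t`-set of vertices has at most
`n - t` missing edges (stated via ordered pairs, so `2 * (n - t)` missing ordered pairs). -/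
noncomputable def tparam {V : Type*} [Fintype V] (G : SimpleGraph V) : ℕ :=
  sSup {t | ∃ T : Finset V, T.card = t ∧ missingPairs G ↑T ≤ 2 * (Fintype.card V - t)}

/-- The clique subdivision number `σ(G)`. -/
noncomputable def subdivNum {V : Type*} [Fintype V] (G : SimpleGraph V) : ℕ :=
  sSup {h | HasKSubdivision G h}

/-!
Upper bound: in a `K_k`-subdivision with branch set `T`, the path joining a non-adjacent pair
of `T` has its second vertex outside `T`, and internal disjointness makes these vertices distinct
for distinct pairs; so `T` has at most `n - k` missing edges.

Lower bound: let `T` witness `t(G)`, so `T` has at most `|Tᶜ|` missing edges. If the missing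
edges of `T` can be matched injectively to common neighbours outside `T`, joining adjacent pairs
directly and missing pairs through their matched vertex gives a `K_{|T|}`-subdivision. Otherwise
Hall's condition fails; take a family `F₀` of missing edges of maximum deficiency. Fewer than
`|F₀| ≤ |Tᶜ|` vertices outside `T` serve `F₀`, so some `w ∉ T` is a common neighbour of no pair
in `F₀`. Shrink `T` to the neighbours of `w`: the degree condition loses at most `Δ` vertices,
and the missing edges left are disjoint from `F₀`, so a violator of Hall's condition among them
would increase the deficiency of `F₀`.
-/

namespace Finset

variable {ι α : Type*} [DecidableEq α] {t : ι → Finset α}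

lemma card_le_card_biUnion_of_disjoint_of_maxDeficiency [DecidableEq ι] {s F₀ F : Finset ι}
    (hF₀ : F₀ ⊆ s) (hmax : ∀ F' ⊆ s, (#F' : ℤ) - #(F'.biUnion t) ≤ #F₀ - #(F₀.biUnion t))
    (hF : F ⊆ s) (hdisj : Disjoint F F₀) : #F ≤ #(F.biUnion t) := by
  have hunion := hmax (F ∪ F₀) (union_subset hF hF₀)
  have hcard : #(F ∪ F₀) = #F + #F₀ := card_union_of_disjoint hdisj
  have hbiUnion : #((F ∪ F₀).biUnion t) ≤ #(F.biUnion t) + #(F₀.biUnion t) := by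
    rw [union_biUnion]
    exact card_union_le _ _
  omega

lemma exists_injective_of_forall_card_le_card_biUnion {s : Finset ι}
    (h : ∀ F ⊆ s, #F ≤ #(F.biUnion t)) :
    ∃ f : s → α, Function.Injective f ∧ ∀ i : s, f i ∈ t i := by
  classical
  refine (all_card_le_biUnion_card_iff_exists_injective fun i : s => t i).1 fun F => ?_
  simpa [card_image_of_injective _ Subtype.val_injective, image_biUnion] using
    h (F.image Subtype.val) (image_subset_iff.2 fun i _ => i.2)

end Finset

open Finset

namespace SimpleGraph

variable {V : Type*}

open scoped Classical in
noncomputable def commonNeighborsIn (G : SimpleGraph V) (W : Finset V) (e : Sym2 V) :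
    Finset V :=
  {w ∈ W | ∀ x ∈ e, G.Adj x w}

@[simp]
lemma mem_commonNeighborsIn {G : SimpleGraph V} {W : Finset V} {e : Sym2 V} {w : V} :
    w ∈ G.commonNeighborsIn W e ↔ w ∈ W ∧ ∀ x ∈ e, G.Adj x w := by
  simp [commonNeighborsIn]

section Counting

variable [DecidableEq V]

lemma card_filter_adj_product_eq_two_mul (H : SimpleGraph V) [DecidableRel H.Adj]
    (A : Finset V) : #{p ∈ A ×ˢ A | H.Adj p.1 p.2} = 2 * #{e ∈ A.sym2 | e ∈ H.edgeSet} := by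
  have himage : {e ∈ A.sym2 | e ∈ H.edgeSet} =
      {p ∈ A ×ˢ A | H.Adj p.1 p.2}.image Sym2.mk.uncurry := by
    rw [sym2_eq_image, filter_image]
    rfl
  rw [himage, card_eq_sum_card_image Sym2.mk.uncurry, mul_comm, ← smul_eq_mul, ← sum_const]
  refine sum_congr rfl fun e he => ?_
  obtain ⟨⟨u, v⟩, huv, rfl⟩ := mem_image.1 he
  simp only [mem_filter, mem_product] at huv
  have hfiber : {p ∈ {p ∈ A ×ˢ A | H.Adj p.1 p.2} |
      Sym2.mk.uncurry p = Sym2.mk.uncurry (u, v)} = {(u, v), (v, u)} := by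
    refine Finset.ext fun ⟨a, b⟩ => ?_
    rw [mem_filter, mem_filter]
    simp only [mem_product, Function.uncurry_apply_pair, Sym2.eq_iff, mem_insert,
      mem_singleton, Prod.mk.injEq]
    constructor
    · exact fun h => h.2
    · rintro (⟨rfl, rfl⟩ | ⟨rfl, rfl⟩)
      · exact ⟨huv, Or.inl ⟨rfl, rfl⟩⟩
      · exact ⟨⟨⟨huv.1.2, huv.1.1⟩, huv.2.symm⟩, Or.inr ⟨rfl, rfl⟩⟩
  rw [hfiber, card_pair (by simp [huv.2.ne])]

variable (G : SimpleGraph V) [DecidableRel G.Adj]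

def missingEdges (A : Finset V) : Finset (Sym2 V) := {e ∈ A.sym2 | e ∈ Gᶜ.edgeSet}

variable {G}

@[simp]
lemma mk_mem_missingEdges {A : Finset V} {u v : V} :
    s(u, v) ∈ G.missingEdges A ↔ u ∈ A ∧ v ∈ A ∧ Gᶜ.Adj u v := by
  simp [missingEdges, and_assoc]

lemma mem_of_mem_missingEdges {A : Finset V} {e : Sym2 V} (he : e ∈ G.missingEdges A) {x : V}
    (hx : x ∈ e) : x ∈ A :=
  mem_sym2_iff.1 (mem_filter.1 he).1 x hx

lemma missingEdges_mono {A B : Finset V} (h : A ⊆ B) : G.missingEdges A ⊆ G.missingEdges B :=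
  filter_subset_filter _ (sym2_mono h)

lemma missingPairs_eq_two_mul_card_missingEdges (A : Finset V) :
    missingPairs G A = 2 * #(G.missingEdges A) := by
  have hset : {p : V × V | p.1 ∈ (A : Set V) ∧ p.2 ∈ (A : Set V) ∧ p.1 ≠ p.2 ∧ ¬G.Adj p.1 p.2} =
      ↑{p ∈ A ×ˢ A | Gᶜ.Adj p.1 p.2} := by
    ext p
    simp [compl_adj, and_assoc]
  rw [missingPairs, hset, Set.ncard_coe_finset, card_filter_adj_product_eq_two_mul]
  rfl

lemma card_add_degree_lt_card_filter_adj_add [Fintype V] {T : Finset V} {w : V} (hw : w ∉ T) :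
    #T + G.degree w < #{x ∈ T | G.Adj w x} + Fintype.card V := by
  have hsub : {x ∈ T | ¬G.Adj w x} ⊆ (insert w (G.neighborFinset w))ᶜ := by
    intro x hx
    simp only [mem_filter] at hx
    simp [hx.2, ne_of_mem_of_not_mem hx.1 hw]
  have hcard := card_le_card hsub
  rw [card_compl, card_insert_of_notMem (by simp), card_neighborFinset_eq_degree] at hcard
  have := card_filter_add_card_filter_not (s := T) (fun x => G.Adj w x)
  have := G.degree_lt_card_verts w
  omega

end Counting

section Extremal

variable {G : SimpleGraph V}

lemma hasKSubdivision_zero : HasKSubdivision G 0 :=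
  ⟨∅, rfl, fun u _ hu => absurd hu (notMem_empty u), by simp [IsSubdivisionFamily]⟩

variable [Fintype V]

lemma bddAbove_hasKSubdivision : BddAbove {k | HasKSubdivision G k} :=
  ⟨Fintype.card V, by rintro _ ⟨T, rfl, -⟩; exact card_le_univ T⟩

lemma HasKSubdivision.le_subdivNum {k : ℕ} (h : HasKSubdivision G k) : k ≤ subdivNum G :=
  le_csSup bddAbove_hasKSubdivision h

lemma hasKSubdivision_subdivNum : HasKSubdivision G (subdivNum G) :=
  Nat.sSup_mem ⟨0, hasKSubdivision_zero⟩ bddAbove_hasKSubdivision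

lemma bddAbove_tparam_set : BddAbove {t | ∃ T : Finset V, #T = t ∧
    missingPairs G T ≤ 2 * (Fintype.card V - t)} :=
  ⟨Fintype.card V, by rintro _ ⟨T, rfl, -⟩; exact card_le_univ T⟩

variable [DecidableEq V] [DecidableRel G.Adj]

lemma missingPairs_le_iff {T : Finset V} :
    missingPairs G T ≤ 2 * (Fintype.card V - #T) ↔ #(G.missingEdges T) ≤ #Tᶜ := by
  rw [missingPairs_eq_two_mul_card_missingEdges, card_compl]
  omega

lemma card_le_tparam {T : Finset V} (hT : #(G.missingEdges T) ≤ #Tᶜ) : #T ≤ tparam G :=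
  le_csSup bddAbove_tparam_set ⟨T, rfl, missingPairs_le_iff.2 hT⟩

lemma exists_card_eq_tparam :
    ∃ T : Finset V, #T = tparam G ∧ #(G.missingEdges T) ≤ #Tᶜ := by
  have hmem : tparam G ∈ _ := Nat.sSup_mem ?_ bddAbove_tparam_set
  · obtain ⟨T, hT, hmiss⟩ := hmem
    exact ⟨T, hT, missingPairs_le_iff.1 (hT ▸ hmiss)⟩
  · exact ⟨0, ∅, rfl, missingPairs_le_iff.2 (by simp [missingEdges])⟩

end Extremal

variable [DecidableEq V] {G : SimpleGraph V} [DecidableRel G.Adj]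

lemma IsSubdivisionFamily.card_missingEdges_le [Fintype V] {T : Finset V}
    {P : ∀ u v : V, u ∈ T → v ∈ T → u ≠ v → G.Walk u v} (hP : IsSubdivisionFamily G T P) :
    #(G.missingEdges T) ≤ #Tᶜ := by
  refine card_le_card_of_forall_subsingleton (fun e w => ∃ u v hu hv h,
    e = s(u, v) ∧ w ∈ (P u v hu hv h).support ∧ w ≠ u ∧ w ≠ v) (fun e he => ?_) ?_
  · induction e using Sym2.ind with | _ u v => ?_
    obtain ⟨hu, hv, huv, hnadj⟩ := by simpa [compl_adj] using he
    set p := P u v hu hv huv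
    have hsnd : G.Adj u p.snd := p.adj_snd (Walk.not_nil_of_ne huv)
    have hsnd_ne_v : p.snd ≠ v := fun h => hnadj (h ▸ hsnd)
    refine ⟨p.snd, mem_compl.2 fun hT => ?_, u, v, hu, hv, huv, rfl, p.getVert_mem_support 1,
      hsnd.ne', hsnd_ne_v⟩
    rcases hP.2.1 u v hu hv huv _ (p.getVert_mem_support 1) hT with h | h
    exacts [hsnd.ne' h, hsnd_ne_v h]
  · rintro w - e₁ ⟨-, u, v, hu, hv, h, rfl, hw, hwu, hwv⟩
      e₂ ⟨-, u', v', hu', hv', h', rfl, hw', hwu', hwv'⟩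
    by_contra hne
    rcases hP.2.2 u v hu hv h u' v' hu' hv' h' hne w hw hwu hwv hw' with rfl | rfl <;>
      contradiction

lemma HasKSubdivision.le_tparam [Fintype V] {k : ℕ} (h : HasKSubdivision G k) :
    k ≤ tparam G := by
  obtain ⟨T, rfl, P, hP⟩ := h
  exact card_le_tparam hP.card_missingEdges_le

section PathVia

variable {S : Finset V} (mid : G.missingEdges S → V) (hmid : ∀ e, ∀ x ∈ e.1, G.Adj x (mid e))

def pathVia (u v : V) (hu : u ∈ S) (hv : v ∈ S) (h : u ≠ v) : G.Walk u v :=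
  if hadj : G.Adj u v then hadj.toWalk
  else
    let e : G.missingEdges S :=
      ⟨s(u, v), mk_mem_missingEdges.2 ⟨hu, hv, (G.compl_adj u v).2 ⟨h, hadj⟩⟩⟩
    .cons (hmid e u (Sym2.mem_mk_left u v))
      (.cons (hmid e v (Sym2.mem_mk_right u v)).symm .nil)

variable {mid hmid} {u v : V} {hu : u ∈ S} {hv : v ∈ S} {h : u ≠ v}

lemma isPath_pathVia : (pathVia mid hmid u v hu hv h).IsPath := by
  unfold pathVia
  split_ifs with hadj
  · exact hadj.isPath_toWalk
  · simp only [Walk.cons_isPath_iff, Walk.isPath_iff_nil, Walk.nil_nil, Walk.support_nil,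
      List.mem_cons, List.not_mem_nil, or_false, true_and, Walk.support_cons, h, or_self]
    exact ⟨(hmid _ v (Sym2.mem_mk_right u v)).ne', (hmid _ u (Sym2.mem_mk_left u v)).ne⟩

lemma mem_support_pathVia {w : V} (hw : w ∈ (pathVia mid hmid u v hu hv h).support) :
    w = u ∨ w = v ∨ ∃ e, e.1 = s(u, v) ∧ w = mid e := by
  unfold pathVia at hw
  split_ifs at hw with hadj
  · exact (by simpa using hw : w = u ∨ w = v).imp_right .inl
  · simp only [Walk.support_cons, Walk.support_nil, List.mem_cons, List.not_mem_nil,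
      or_false] at hw
    rcases hw with rfl | rfl | rfl
    exacts [.inl rfl, .inr (.inr ⟨_, rfl, rfl⟩), .inr (.inl rfl)]

lemma isSubdivisionFamily_pathVia (hinj : Function.Injective mid) (hout : ∀ e, mid e ∉ S) :
    IsSubdivisionFamily G S (pathVia mid hmid) := by
  refine ⟨fun u v hu hv h => isPath_pathVia, fun u v hu hv h w hw hwS => ?_,
    fun u v hu hv h u' v' hu' hv' h' hne w hw hwu hwv hw' => ?_⟩
  · rcases mem_support_pathVia hw with rfl | rfl | ⟨e, -, rfl⟩
    exacts [.inl rfl, .inr rfl, absurd hwS (hout e)]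
  · obtain ⟨e, he, rfl⟩ := ((mem_support_pathVia hw).resolve_left hwu).resolve_left hwv
    rcases mem_support_pathVia hw' with hwu' | hwv' | ⟨e', he', hee'⟩
    · exact .inl hwu'
    · exact .inr hwv'
    · exact absurd (he ▸ he' ▸ congrArg Subtype.val (hinj hee')) hne

end PathVia

variable [Fintype V] {Δ : ℕ}

lemma exists_subset_forall_card_le_card_biUnion_commonNeighborsIn
    (hdeg : ∀ v : V, Fintype.card V - Δ - 1 ≤ G.degree v) {T : Finset V}
    (hT : #(G.missingEdges T) ≤ #Tᶜ) :
    ∃ S ⊆ T, #T ≤ #S + Δ ∧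
      ∀ F ⊆ G.missingEdges S, #F ≤ #(F.biUnion (G.commonNeighborsIn Tᶜ)) := by
  set t := G.commonNeighborsIn Tᶜ
  obtain ⟨F₀, hF₀, hmax⟩ := exists_max_image (G.missingEdges T).powerset
    (fun F => (#F : ℤ) - #(F.biUnion t)) ⟨∅, empty_mem_powerset _⟩
  rw [mem_powerset] at hF₀
  replace hmax : ∀ F ⊆ G.missingEdges T,
      (#F : ℤ) - #(F.biUnion t) ≤ #F₀ - #(F₀.biUnion t) :=
    fun F hF => hmax F (mem_powerset.2 hF)
  by_cases hdef : #F₀ ≤ #(F₀.biUnion t)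
  · refine ⟨T, Subset.rfl, le_self_add, fun F hF => ?_⟩
    have := hmax F hF
    omega
  obtain ⟨w, hwT, hwF₀⟩ : ∃ w ∈ Tᶜ, w ∉ F₀.biUnion t := by
    refine exists_mem_notMem_of_card_lt_card ?_
    have := card_le_card hF₀
    omega
  refine ⟨{x ∈ T | G.Adj w x}, filter_subset _ _, ?_, fun F hF => ?_⟩
  · have := card_add_degree_lt_card_filter_adj_add (G := G) (mem_compl.1 hwT)
    have := hdeg w
    omega
  refine card_le_card_biUnion_of_disjoint_of_maxDeficiency hF₀ hmax
    (hF.trans (missingEdges_mono (filter_subset _ _)))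
    (Finset.disjoint_left.2 fun e heF heF₀ => hwF₀ (mem_biUnion.2 ⟨e, heF₀, ?_⟩))
  exact mem_commonNeighborsIn.2
    ⟨hwT, fun x hx => (mem_filter.1 (mem_of_mem_missingEdges (hF heF) hx)).2.symm⟩

lemma exists_hasKSubdivision_of_card_missingEdges_le
    (hdeg : ∀ v : V, Fintype.card V - Δ - 1 ≤ G.degree v) {T : Finset V}
    (hT : #(G.missingEdges T) ≤ #Tᶜ) : ∃ k, #T ≤ k + Δ ∧ HasKSubdivision G k := by
  obtain ⟨S, hST, hcard, hall⟩ :=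
    exists_subset_forall_card_le_card_biUnion_commonNeighborsIn hdeg hT
  obtain ⟨mid, hinj, hmid⟩ := exists_injective_of_forall_card_le_card_biUnion hall
  simp only [mem_commonNeighborsIn, mem_compl] at hmid
  exact ⟨#S, hcard, S, rfl, _, isSubdivisionFamily_pathVia (hmid := fun e => (hmid e).2) hinj
    fun e he => (hmid e).1 (hST he)⟩

end SimpleGraph

theorem subdivision_number_vs_tparam {V : Type*} [Fintype V] [DecidableEq V]
    (G : SimpleGraph V) [DecidableRel G.Adj] (Δ : ℕ)
    (hdeg : ∀ v : V, Fintype.card V - Δ - 1 ≤ G.degree v) :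
    tparam G - Δ ≤ subdivNum G ∧ subdivNum G ≤ tparam G := by
  refine ⟨?_, hasKSubdivision_subdivNum.le_tparam⟩
  obtain ⟨T, hT, hmiss⟩ := exists_card_eq_tparam (G := G)
  obtain ⟨k, hk, hsub⟩ := exists_hasKSubdivision_of_card_missingEdges_le hdeg hmiss
  have := hsub.le_subdivNum
  omega
end

section
/- Let G be a graph on n ≥ t vertices such that every set of t vertices contains at least x non-adjacent pairs. Then some vertex of G has at least 2nx/t² non-neighbors. -/
/-!
Double count the pairs (T, p) with T a t-set and p an ordered non-adjacent pair inside T.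
Every t-set contains at least 2x such pairs, and each of the ∑ᵥ d̄(v) ≤ n Δ̄ ordered non-adjacent
pairs lies in C(n-2, t-2) of the t-sets, where d̄ and Δ̄ are the degree and maximum degree in the
complement. Hence C(n,t)·2x ≤ nΔ̄·C(n-2,t-2), i.e. 2x(n-1) ≤ Δ̄ t(t-1), and n(t-1) ≤ (n-1)t
turns this into 2nx ≤ Δ̄ t².
-/

open SimpleGraph

open Finset

theorem Finset.choose_mul_le_card_mul_choose {α : Type*} [Fintype α] [DecidableEq α]
    (r : α → α → Prop) [DecidableRel r] (hr : ∀ a, ¬ r a a) {t m : ℕ} (ht : 2 ≤ t)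
    (hm : ∀ T : Finset α, #T = t → m ≤ #{p ∈ T ×ˢ T | r p.1 p.2}) :
    (Fintype.card α).choose t * m ≤
      #{p : α × α | r p.1 p.2} * (Fintype.card α - 2).choose (t - 2) := by
  set N : Finset (α × α) := {p | r p.1 p.2}
  have hbelow : ∀ p ∈ N, #((powersetCard t univ).bipartiteBelow (fun T p ↦ p ∈ T ×ˢ T) p) =
      (Fintype.card α - 2).choose (t - 2) := by
    intro p hp
    have hne : p.1 ≠ p.2 := fun h ↦ hr p.1 (h ▸ (mem_filter.1 hp).2)
    rw [bipartiteBelow, ← card_pair hne, ← card_univ,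
      ← card_filter_powersetCard_subset _ _ _ (subset_univ _) (by rwa [card_pair hne])]
    simp only [mem_product, insert_subset_iff, singleton_subset_iff]
  rw [← card_univ, ← card_powersetCard]
  refine card_mul_le_card_mul _ (fun T hT ↦ ?_) fun p hp ↦ (hbelow p hp).le
  convert hm T (mem_powersetCard_univ.1 hT) using 2
  ext p
  simp [N, bipartiteAbove, and_comm]

theorem Nat.choose_mul_le_of_choose_mul_le {n t s m k : ℕ} (hst : s ≤ t) (htn : t ≤ n)
    (h : n.choose t * m ≤ k * (n - s).choose (t - s)) : n.choose s * m ≤ k * t.choose s := by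
  have hpos : 0 < (n - s).choose (t - s) := Nat.choose_pos (by omega)
  refine Nat.le_of_mul_le_mul_right ?_ hpos
  calc n.choose s * m * (n - s).choose (t - s) = n.choose t * m * t.choose s := by
        rw [mul_right_comm, ← Nat.choose_mul hst]; ring
    _ ≤ k * (n - s).choose (t - s) * t.choose s := Nat.mul_le_mul_right _ h
    _ = k * t.choose s * (n - s).choose (t - s) := by ring

theorem div_sq_le_of_choose_two_mul_le {n t m D : ℕ} (ht : 2 ≤ t) (htn : t ≤ n)
    (h : n.choose 2 * m ≤ n * D * t.choose 2) : (n * m : ℝ) / t ^ 2 ≤ D := by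
  have hn : (0 : ℝ) < n := by exact_mod_cast (show 0 < n by omega)
  have ht' : (2 : ℝ) ≤ t := by exact_mod_cast ht
  have htn' : (t : ℝ) ≤ n := by exact_mod_cast htn
  have h' : ((n - 1) * m : ℝ) ≤ D * (t * (t - 1)) := by
    have := (Nat.cast_le (α := ℝ)).2 h
    push_cast [Nat.cast_choose_two] at this
    nlinarith
  rw [div_le_iff₀ (by positivity)]
  have hm : (0 : ℝ) ≤ m := m.cast_nonneg
  nlinarith [mul_nonneg hm (sub_nonneg.2 htn')]

namespace SimpleGraph

theorem card_filter_adj_eq_sum_degree {V : Type*} [Fintype V] (G : SimpleGraph V)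
    [DecidableRel G.Adj] : #{p : V × V | G.Adj p.1 p.2} = ∑ v, G.degree v := by
  rw [card_filter, Fintype.sum_prod_type]
  refine sum_congr rfl fun v _ ↦ ?_
  rw [← card_neighborFinset_eq_degree, neighborFinset_eq_filter, card_filter]

end SimpleGraph

theorem missingPairs_coe_eq_card {V : Type*} (G : SimpleGraph V) [DecidableRel Gᶜ.Adj]
    (T : Finset V) : missingPairs G T = #{p ∈ T ×ˢ T | Gᶜ.Adj p.1 p.2} := by
  rw [missingPairs, ← Set.ncard_coe_finset]
  congr 1
  ext p
  simp [and_assoc]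

theorem missingPairs_singleton {V : Type*} (G : SimpleGraph V) (v : V) :
    missingPairs G {v} = 0 := by
  rw [missingPairs, ← Set.ncard_empty (V × V)]
  congr 1
  exact Set.eq_empty_of_forall_notMem fun p hp ↦ hp.2.2.1 (hp.1.trans hp.2.1.symm)

theorem large_missing_degree_of_locally_missing {V : Type*} [Fintype V] [DecidableEq V]
    (G : SimpleGraph V) [DecidableRel G.Adj] (n t x : ℕ)
    (hn : Fintype.card V = n) (ht1 : 1 ≤ t) (ht : t ≤ n)
    (hx : ∀ T : Finset V, T.card = t → 2 * x ≤ missingPairs G ↑T) :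
    ∃ v : V, 2 * (n : ℝ) * x / (t : ℝ) ^ 2 ≤ (Gᶜ.degree v : ℝ) := by
  have : Nonempty V := Fintype.card_pos_iff.1 (by omega)
  obtain ⟨v, -, hv⟩ := exists_max_image univ (Gᶜ.degree ·) univ_nonempty
  refine ⟨v, ?_⟩
  obtain rfl | ht2 := ht1.eq_or_lt
  · have hx0 := hx {v} rfl
    rw [coe_singleton, missingPairs_singleton] at hx0
    simp [show x = 0 by omega]
  have hcount := choose_mul_le_card_mul_choose Gᶜ.Adj Gᶜ.loopless.irrefl ht2
    fun T hT ↦ missingPairs_coe_eq_card G T ▸ hx T hT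
  have hsum : ∑ w, Gᶜ.degree w ≤ n * Gᶜ.degree v := by
    simpa [hn] using sum_le_card_nsmul univ _ _ fun w _ ↦ hv w (mem_univ w)
  rw [card_filter_adj_eq_sum_degree, hn] at hcount
  have := div_sq_le_of_choose_two_mul_le ht2 ht <|
    Nat.choose_mul_le_of_choose_mul_le ht2 ht <| hcount.trans <| Nat.mul_le_mul_right _ hsum
  calc 2 * (n : ℝ) * x / (t : ℝ) ^ 2 = n * ((2 * x : ℕ) : ℝ) / (t : ℝ) ^ 2 := by push_cast; ring
    _ ≤ (Gᶜ.degree v : ℝ) := this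
end

section
/- Let D be a positive integer and let H be a graph on t vertices with at least x non-adjacent pairs, such that every vertex has at most D non-neighbors. Then the number of cliques of H (including the empty clique) is at most 2^{t - x/D} · (1 + 2^{-1/D})^{x/D}. -/
open SimpleGraph

/-! Repeatedly delete both ends of a non-edge `uv`. Since `u` and `v` lie in no common clique,
every clique meets `{u, v}` in `∅`, `{u}` or `{v}`, so each deletion costs a factor `3/4`
against the trivial bound `2 ^ t`, while it destroys at most `2D - 1` non-edges (`uv` is counted
at both ends). Hence the clique count is at most `2 ^ t * (3/4) ^ m` for some `m ≥ x / (2D - 1)`,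
and `(3/4) ^ D ≤ ((1 + 2 ^ (-1/D)) / 2) ^ (2D - 1)` turns this into the stated bound. -/

open Finset

namespace SimpleGraph

variable {V : Type*} [DecidableEq V]

def cliquesIn (G : SimpleGraph V) [DecidableRel G.Adj] (A : Finset V) : Finset (Finset V) :=
  {s ∈ A.powerset | G.IsClique (s : Set V)}

section Cliques

variable (G : SimpleGraph V) [DecidableRel G.Adj]

theorem cliqueCount_eq_card_cliquesIn_univ [Fintype V] : cliqueCount G = #(G.cliquesIn univ) := by
  rw [cliqueCount, ← Set.ncard_coe_finset]
  congr 1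
  ext s
  simp [cliquesIn]

theorem card_cliquesIn_le_two_pow (A : Finset V) : #(G.cliquesIn A) ≤ 2 ^ #A :=
  (card_filter_le _ _).trans_eq (card_powerset A)

theorem card_cliquesIn_le_card_cliquesIn_sdiff_mul (A S : Finset V) :
    #(G.cliquesIn A) ≤ #(G.cliquesIn (A \ S)) * #(G.cliquesIn S) := by
  rw [← card_product]
  refine card_le_card_of_injOn (fun s => (s \ S, s ∩ S)) (fun s hs => ?_) (fun s _ s' _ h => ?_)
  · simp only [cliquesIn, coe_filter, mem_powerset, Set.mem_ofPred_eq] at hs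
    simp only [cliquesIn, mem_coe, mem_product, mem_filter, mem_powerset]
    exact ⟨⟨sdiff_subset_sdiff hs.1 le_rfl, hs.2.subset (by simp)⟩,
      inter_subset_right, hs.2.subset (by simp)⟩
  · simp only [Prod.mk.injEq] at h
    rw [← sdiff_union_inter s S, ← sdiff_union_inter s' S, h.1, h.2]

theorem card_cliquesIn_pair_le {u v : V} (hne : u ≠ v) (hnadj : ¬ G.Adj u v) :
    #(G.cliquesIn {u, v}) ≤ 3 := by
  have hsub : G.cliquesIn {u, v} ⊆ ({u, v} : Finset V).powerset.erase {u, v} := by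
    intro s hs
    simp only [cliquesIn, mem_filter, mem_powerset] at hs
    refine mem_erase.mpr ⟨?_, mem_powerset.mpr hs.1⟩
    rintro rfl
    exact hnadj (hs.2 (by simp) (by simp) hne)
  calc #(G.cliquesIn {u, v}) ≤ #(({u, v} : Finset V).powerset.erase {u, v}) := card_le_card hsub
    _ = 3 := by rw [card_erase_of_mem (mem_powerset_self _), card_powerset, card_pair hne]; rfl

end Cliques

variable [Fintype V]

theorem card_edgeFinset_inter_sym2_add_one_le (H : SimpleGraph V) [DecidableRel H.Adj]
    {u v : V} (huv : H.Adj u v) (A : Finset V) :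
    #(H.edgeFinset ∩ A.sym2) + 1 ≤
      #(H.edgeFinset ∩ (A \ {u, v}).sym2) + H.degree u + H.degree v := by
  have hcover : H.edgeFinset ∩ A.sym2 ⊆
      H.edgeFinset ∩ (A \ {u, v}).sym2 ∪ (H.incidenceFinset u ∪ H.incidenceFinset v) := by
    intro e he
    rw [mem_inter, mem_edgeFinset, mem_sym2_iff] at he
    by_cases hu : u ∈ e
    · simp [mem_incidenceFinset, incidenceSet, hu, he.1]
    by_cases hv : v ∈ e
    · simp [mem_incidenceFinset, incidenceSet, hv, he.1]
    refine mem_union_left _ <|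
      mem_inter.mpr ⟨mem_edgeFinset.2 he.1, mem_sym2_iff.mpr fun w hw => ?_⟩
    simp only [mem_sdiff, mem_insert, mem_singleton]
    exact ⟨he.2 w hw, by rintro (rfl | rfl) <;> contradiction⟩
  have hshared : s(u, v) ∈ H.incidenceFinset u ∩ H.incidenceFinset v := by
    simp [mem_incidenceFinset, incidenceSet, huv]
  calc #(H.edgeFinset ∩ A.sym2) + 1
      ≤ #(H.edgeFinset ∩ (A \ {u, v}).sym2) + #(H.incidenceFinset u ∪ H.incidenceFinset v)
          + #(H.incidenceFinset u ∩ H.incidenceFinset v) :=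
        add_le_add ((card_le_card hcover).trans (card_union_le _ _)) (card_pos.mpr ⟨_, hshared⟩)
    _ = #(H.edgeFinset ∩ (A \ {u, v}).sym2) + H.degree u + H.degree v := by
        rw [add_assoc, card_union_add_card_inter, card_incidenceFinset_eq_degree,
          card_incidenceFinset_eq_degree, add_assoc]

theorem missingPairs_univ (G : SimpleGraph V) [DecidableRel G.Adj] :
    missingPairs G Set.univ = 2 * #Gᶜ.edgeFinset := by
  have hrange :
      {p : V × V | p.1 ∈ Set.univ ∧ p.2 ∈ Set.univ ∧ p.1 ≠ p.2 ∧ ¬ G.Adj p.1 p.2} =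
        Set.range (Dart.toProd : Gᶜ.Dart → V × V) := by
    ext p
    refine ⟨fun h => ⟨⟨p, h.2.2⟩, rfl⟩, ?_⟩
    rintro ⟨d, rfl⟩
    exact ⟨trivial, trivial, d.adj⟩
  rw [missingPairs, hrange, Set.ncard_range_of_injective Dart.toProd_injective,
    Nat.card_eq_fintype_card, dart_card_eq_twice_card_edges]

theorem exists_four_pow_mul_card_cliquesIn_le (G : SimpleGraph V) [DecidableRel G.Adj] {D : ℕ}
    (hdeg : ∀ v, Gᶜ.degree v ≤ D) (A : Finset V) :
    ∃ m, #(Gᶜ.edgeFinset ∩ A.sym2) ≤ (2 * D - 1) * m ∧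
      4 ^ m * #(G.cliquesIn A) ≤ 3 ^ m * 2 ^ #A := by
  induction A using Finset.strongInduction with
  | H A ih =>
  rcases (Gᶜ.edgeFinset ∩ A.sym2).eq_empty_or_nonempty with hE | ⟨e, he⟩
  · exact ⟨0, by simp [hE], by simpa using G.card_cliquesIn_le_two_pow A⟩
  induction e using Sym2.ind with
  | h u v =>
  rw [mem_inter, mem_edgeFinset, mem_edgeSet, mem_sym2_iff] at he
  obtain ⟨huv, huvA⟩ := he
  obtain ⟨hne, hnadj⟩ := (compl_adj G u v).1 huv
  have hpair : {u, v} ⊆ A :=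
    insert_subset_iff.2
      ⟨huvA u (Sym2.mem_mk_left u v), singleton_subset_iff.2 (huvA v (Sym2.mem_mk_right u v))⟩
  have hcard : #A = #(A \ {u, v}) + 2 := by
    rw [← card_sdiff_add_card_eq_card hpair, card_pair hne]
  obtain ⟨m, hEm, hCm⟩ := ih _ (sdiff_ssubset hpair (insert_nonempty u {v}))
  refine ⟨m + 1, ?_, ?_⟩
  · have := Gᶜ.card_edgeFinset_inter_sym2_add_one_le huv A
    have := hdeg u
    have := hdeg v
    rw [mul_add_one]
    omega
  · have h3 : #(G.cliquesIn A) ≤ 3 * #(G.cliquesIn (A \ {u, v})) :=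
      (G.card_cliquesIn_le_card_cliquesIn_sdiff_mul A {u, v}).trans
        (by rw [mul_comm]; exact Nat.mul_le_mul_right _ (G.card_cliquesIn_pair_le hne hnadj))
    calc 4 ^ (m + 1) * #(G.cliquesIn A) ≤ 4 ^ (m + 1) * (3 * #(G.cliquesIn (A \ {u, v}))) :=
          Nat.mul_le_mul_left _ h3
      _ = 12 * (4 ^ m * #(G.cliquesIn (A \ {u, v}))) := by ring
      _ ≤ 12 * (3 ^ m * 2 ^ #(A \ {u, v})) := Nat.mul_le_mul_left _ hCm
      _ = 3 ^ (m + 1) * 2 ^ #A := by rw [hcard]; ring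

end SimpleGraph

theorem three_quarters_pow_le_of_pow_eq_half {b : ℝ} (hb0 : 0 ≤ b) (hb1 : b ≤ 1) {D : ℕ}
    (hD : D ≠ 0) (hbD : b ^ D = 1 / 2) :
    (3 / 4 : ℝ) ^ D ≤ ((1 + b) / 2) ^ (2 * D - 1) := by
  match D, hD with
  | 1, _ => norm_num at hbD ⊢; linarith
  | 2, _ => nlinarith
  | d + 3, _ =>
    calc (3 / 4 : ℝ) ^ (d + 3) ≤ (3 / 4) ^ 3 :=
          pow_le_pow_of_le_one (by norm_num) (by norm_num) (by omega)
      _ ≤ b ^ (d + 3) := by rw [hbD]; norm_num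
      _ ≤ (((1 + b) / 2) ^ 2) ^ (d + 3) :=
          pow_le_pow_left₀ hb0 (by nlinarith [sq_nonneg (1 - b)]) _
      _ = ((1 + b) / 2) ^ (2 * (d + 3)) := by rw [← pow_mul]
      _ ≤ ((1 + b) / 2) ^ (2 * (d + 3) - 1) :=
        pow_le_pow_of_le_one (by positivity) (by linarith) (by omega)

theorem two_rpow_neg_inv_le_one (D : ℕ) : (2 : ℝ) ^ (-(1 : ℝ) / D) ≤ 1 :=
  Real.rpow_le_one_of_one_le_of_nonpos one_le_two
    (div_nonpos_of_nonpos_of_nonneg (by norm_num) (by positivity))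

theorem three_quarters_pow_le (D : ℕ) :
    (3 / 4 : ℝ) ^ D ≤ ((1 + (2 : ℝ) ^ (-(1 : ℝ) / D)) / 2) ^ (2 * D - 1) := by
  rcases eq_or_ne D 0 with rfl | hD
  · simp
  refine three_quarters_pow_le_of_pow_eq_half (by positivity) (two_rpow_neg_inv_le_one D) hD ?_
  rw [← Real.rpow_natCast, ← Real.rpow_mul zero_le_two,
    div_mul_cancel₀ _ (Nat.cast_ne_zero.2 hD), Real.rpow_neg_one, one_div]

theorem pow_le_rpow_div_of_pow_le {r c : ℝ} {D k m x : ℕ} (hr0 : 0 ≤ r) (hr1 : r ≤ 1)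
    (hc0 : 0 < c) (hc1 : c ≤ 1) (hrc : r ^ D ≤ c ^ k) (hx : x ≤ k * m) :
    r ^ m ≤ c ^ ((x : ℝ) / D) := by
  rcases eq_or_ne D 0 with rfl | hD
  · simpa using pow_le_one₀ hr0 hr1
  have hD' : (D : ℝ) ≠ 0 := by exact_mod_cast hD
  calc r ^ m = (r ^ D) ^ ((m : ℝ) / D) := by
        rw [← Real.rpow_natCast r D, ← Real.rpow_mul hr0, mul_div_cancel₀ _ hD',
          Real.rpow_natCast]
    _ ≤ (c ^ k) ^ ((m : ℝ) / D) := Real.rpow_le_rpow (by positivity) hrc (by positivity)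
    _ = c ^ (((k * m : ℕ) : ℝ) / D) := by
        rw [← Real.rpow_natCast c k, ← Real.rpow_mul hc0.le, Nat.cast_mul, mul_div_assoc]
    _ ≤ c ^ ((x : ℝ) / D) :=
        Real.rpow_le_rpow_of_exponent_ge hc0 hc1 (by gcongr)

theorem clique_count_bound_dense_general {V : Type*} [Fintype V] [DecidableEq V]
    (G : SimpleGraph V) [DecidableRel G.Adj] (t x D : ℕ)
    (ht : Fintype.card V = t)
    (hx : 2 * x ≤ missingPairs G Set.univ)
    (hdeg : ∀ v : V, Gᶜ.degree v ≤ D) :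
    (cliqueCount G : ℝ) ≤
      (2 : ℝ) ^ ((t : ℝ) - (x : ℝ) / D) *
        (1 + (2 : ℝ) ^ (-(1 : ℝ) / D)) ^ ((x : ℝ) / D) := by
  obtain ⟨m, hEm, hCm⟩ := G.exists_four_pow_mul_card_cliquesIn_le hdeg univ
  have hxm : x ≤ (2 * D - 1) * m := by
    rw [G.missingPairs_univ] at hx
    rw [inter_eq_left.2 fun e _ => mem_sym2_iff.2 fun _ _ => mem_univ _] at hEm
    omega
  have hcliques : (cliqueCount G : ℝ) ≤ 2 ^ t * (3 / 4) ^ m := by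
    have hCm' : (4 ^ m * #(G.cliquesIn univ) : ℝ) ≤ 3 ^ m * 2 ^ t := by
      rw [← ht, ← card_univ]; exact_mod_cast hCm
    rw [G.cliqueCount_eq_card_cliquesIn_univ, div_pow, mul_div_assoc',
      le_div_iff₀ (by positivity)]
    linarith
  have hb := two_rpow_neg_inv_le_one D
  have hpow : (3 / 4 : ℝ) ^ m ≤ ((1 + (2 : ℝ) ^ (-(1 : ℝ) / D)) / 2) ^ ((x : ℝ) / D) :=
    pow_le_rpow_div_of_pow_le (by norm_num) (by norm_num) (by positivity) (by linarith)
      (three_quarters_pow_le D) hxm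
  calc (cliqueCount G : ℝ) ≤ 2 ^ t * (3 / 4) ^ m := hcliques
    _ ≤ 2 ^ t * ((1 + (2 : ℝ) ^ (-(1 : ℝ) / D)) / 2) ^ ((x : ℝ) / D) := by gcongr
    _ = _ := by
        rw [Real.div_rpow (by positivity) zero_le_two, Real.rpow_sub zero_lt_two,
          Real.rpow_natCast]
        ring

theorem clique_count_bound_dense {V : Type*} [Fintype V] [DecidableEq V]
    (G : SimpleGraph V) [DecidableRel G.Adj] (t x D : ℕ)
    (hD : 1 ≤ D) (ht : Fintype.card V = t)
    (hx : 2 * x ≤ missingPairs G Set.univ)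
    (hdeg : ∀ v : V, Gᶜ.degree v ≤ D) :
    (cliqueCount G : ℝ) ≤
      (2 : ℝ) ^ ((t : ℝ) - (x : ℝ) / D) *
        (1 + (2 : ℝ) ^ (-(1 : ℝ) / D)) ^ ((x : ℝ) / D) :=
  clique_count_bound_dense_general G t x D ht hx hdeg
end

section
/- Let W be a maximum clique in a graph H on t vertices in which every vertex has at most D non-neighbors, let ω = |W|, and for each vertex v outside W let S_v ⊆ W be the set of non-neighbors of v in W. Then for every vertex v outside W, 1 ≤ |S_v| ≤ D, and the number of cliques of H is exactly the sum over cliques Q contained in V(H)\W of 2^{ω - |∪_{v∈Q} S_v|}. -/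
open SimpleGraph

/-!
Split each clique `s` of `G` as `(s \ W, s ∩ W)`. The first part is a clique `Q` avoiding `W`, and
since `W` is a clique the second part can be any subset of the common neighbourhood of `Q` in `W`,
which is `W` minus the union of the non-neighbourhoods `S v`, `v ∈ Q`. Maximality of `W` forces
`S v ≠ ∅` for `v ∉ W`, and `S v` lies in the non-neighbourhood of `v`, so `|S v| ≤ D`.
-/

namespace SimpleGraph

open Finset

variable {V : Type*} {G : SimpleGraph V} {W : Finset V}

theorem IsMaximumClique.exists_not_adj [Finite V] [DecidableEq V] (hW : G.IsMaximumClique W)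
    {v : V} (hv : v ∉ W) : ∃ w ∈ W, ¬G.Adj v w := by
  by_contra! hadj
  have hclique : G.IsClique (insert v W : Finset V) := by
    rw [coe_insert]
    exact hW.isClique.insert fun w hw _ ↦ hadj w hw
  have := hW.maximum _ hclique
  rw [card_insert_of_notMem hv] at this
  omega

theorem card_filter_not_adj_le_degree_compl [Fintype V] [DecidableEq V] [DecidableRel G.Adj]
    {v : V} (hv : v ∉ W) : #{w ∈ W | ¬G.Adj v w} ≤ Gᶜ.degree v := by
  rw [← card_neighborFinset_eq_degree]
  refine card_le_card fun w hw ↦ ?_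
  rw [mem_filter] at hw
  rw [mem_neighborFinset, compl_adj]
  exact ⟨fun h ↦ hv (h ▸ hw.1), hw.2⟩

variable [DecidableEq V]

theorem isClique_union_iff {s t : Finset V} :
    G.IsClique (s ∪ t : Finset V) ↔
      G.IsClique s ∧ G.IsClique t ∧ ∀ a ∈ s, ∀ b ∈ t, a ≠ b → G.Adj a b := by
  have := G.symm
  rw [coe_union]
  exact Set.pairwise_union_of_symm

variable [DecidableRel G.Adj]

theorem sdiff_biUnion_filter_not_adj (Q : Finset V) :
    W \ Q.biUnion (fun v ↦ {w ∈ W | ¬G.Adj v w}) = {w ∈ W | ∀ v ∈ Q, G.Adj v w} := by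
  ext w
  simp only [mem_sdiff, mem_biUnion, mem_filter]
  grind

/-- The cliques `s` with `s \ W = Q` are the sets `Q ∪ Q'` with `Q'` a subset of the common
neighbourhood of `Q` in `W`, recovered from `s` as `s ∩ W`. -/
theorem card_filter_isClique_sdiff_eq [Fintype V] (hW : G.IsClique W) {Q : Finset V}
    (hQ : G.IsClique Q) (hQW : Disjoint Q W) :
    #{s : Finset V | G.IsClique s ∧ s \ W = Q} = 2 ^ #{w ∈ W | ∀ v ∈ Q, G.Adj v w} := by
  rw [← card_powerset]
  refine card_bij' (fun s _ ↦ s ∩ W) (fun Q' _ ↦ Q ∪ Q') ?_ ?_ ?_ ?_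
  · intro s hs
    refine mem_powerset.2 fun w hw ↦ ?_
    simp only [mem_filter, mem_univ, true_and] at hs
    obtain ⟨hs, rfl⟩ := hs
    rw [mem_inter] at hw
    refine mem_filter.2 ⟨hw.2, fun v hv ↦ ?_⟩
    rw [mem_sdiff] at hv
    exact hs hv.1 hw.1 fun h ↦ hv.2 (h ▸ hw.2)
  · intro Q' hQ'
    rw [mem_powerset] at hQ'
    have hQ'W : Q' ⊆ W := hQ'.trans (filter_subset _ _)
    simp only [mem_filter, mem_univ, true_and]
    refine ⟨isClique_union_iff.2 ⟨hQ, hW.subset (coe_subset.2 hQ'W),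
      fun a ha b hb _ ↦ (mem_filter.1 (hQ' hb)).2 a ha⟩, ?_⟩
    rw [union_sdiff_distrib, sdiff_eq_self_of_disjoint hQW, sdiff_eq_empty_iff_subset.2 hQ'W,
      union_empty]
  · intro s hs
    simp only [mem_filter, mem_univ, true_and] at hs
    rw [← hs.2, sdiff_union_inter]
  · intro Q' hQ'
    rw [mem_powerset] at hQ'
    rw [union_inter_distrib_right, disjoint_iff_inter_eq_empty.1 hQW, empty_union,
      inter_eq_left.2 (hQ'.trans (filter_subset _ _))]

theorem cliqueCount_eq_sum_two_pow [Fintype V] (hW : G.IsClique W) :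
    cliqueCount G = ∑ Q ∈ {Q : Finset V | G.IsClique Q ∧ ∀ v ∈ Q, v ∉ W},
      2 ^ #{w ∈ W | ∀ v ∈ Q, G.Adj v w} := by
  have hcount : cliqueCount G = #{s : Finset V | G.IsClique s} := by
    rw [cliqueCount, ← Set.ncard_coe_finset]
    congr
    ext
    simp
  have hmaps : ∀ s ∈ ({s : Finset V | G.IsClique s} : Finset _),
      s \ W ∈ ({Q : Finset V | G.IsClique Q ∧ ∀ v ∈ Q, v ∉ W} : Finset _) := by
    intro s hs
    simp only [mem_filter, mem_univ, true_and] at hs ⊢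
    exact ⟨hs.subset (coe_subset.2 sdiff_subset), fun v hv ↦ (mem_sdiff.1 hv).2⟩
  rw [hcount, card_eq_sum_card_fiberwise hmaps]
  refine sum_congr rfl fun Q hQ ↦ ?_
  simp only [mem_filter, mem_univ, true_and] at hQ
  have hQW : Disjoint Q W := Finset.disjoint_left.2 fun _ ↦ hQ.2 _
  rw [filter_filter, card_filter_isClique_sdiff_eq hW hQ.1 hQW]

end SimpleGraph

theorem clique_count_decomposition_general {V : Type*} [Fintype V] [DecidableEq V]
    (G : SimpleGraph V) [DecidableRel G.Adj] (D : ℕ)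
    (hdeg : ∀ v : V, Gᶜ.degree v ≤ D)
    (W : Finset V) (hW : G.IsClique (W : Set V))
    (hmax : ∀ s : Finset V, G.IsClique (s : Set V) → s.card ≤ W.card)
    (S : V → Finset V) (hS : ∀ v : V, S v = W.filter fun w => ¬ G.Adj v w) :
    (∀ v : V, v ∉ W → 1 ≤ (S v).card ∧ (S v).card ≤ D) ∧
    cliqueCount G =
      ∑ Q ∈ Finset.univ.filter
          (fun Q : Finset V => G.IsClique (Q : Set V) ∧ ∀ v ∈ Q, v ∉ W),
        2 ^ (W.card - (Q.biUnion S).card) := by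
  obtain rfl : S = fun v ↦ W.filter fun w ↦ ¬G.Adj v w := funext hS
  refine ⟨fun v hv ↦ ⟨?_, (card_filter_not_adj_le_degree_compl hv).trans (hdeg v)⟩, ?_⟩
  · obtain ⟨w, hw, hvw⟩ := IsMaximumClique.exists_not_adj ⟨hW, hmax⟩ hv
    exact Finset.card_pos.2 ⟨w, Finset.mem_filter.2 ⟨hw, hvw⟩⟩
  · rw [cliqueCount_eq_sum_two_pow hW]
    refine Finset.sum_congr rfl fun Q _ ↦ ?_
    have hsub : Q.biUnion (fun v ↦ W.filter fun w ↦ ¬G.Adj v w) ⊆ W :=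
      Finset.biUnion_subset.2 fun _ _ ↦ Finset.filter_subset _ _
    rw [← Finset.card_sdiff_of_subset hsub, sdiff_biUnion_filter_not_adj]
    -- the two filters carry different, though equal, `Decidable` instances
    congr!

theorem clique_count_decomposition {V : Type*} [Fintype V] [DecidableEq V]
    (G : SimpleGraph V) [DecidableRel G.Adj] (t D : ℕ)
    (ht : Fintype.card V = t)
    (hdeg : ∀ v : V, Gᶜ.degree v ≤ D)
    (W : Finset V) (hW : G.IsClique (W : Set V))
    (hmax : ∀ s : Finset V, G.IsClique (s : Set V) → s.card ≤ W.card)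
    (S : V → Finset V) (hS : ∀ v : V, S v = W.filter fun w => ¬ G.Adj v w) :
    (∀ v : V, v ∉ W → 1 ≤ (S v).card ∧ (S v).card ≤ D) ∧
    cliqueCount G =
      ∑ Q ∈ Finset.univ.filter
          (fun Q : Finset V => G.IsClique (Q : Set V) ∧ ∀ v ∈ Q, v ∉ W),
        2 ^ (W.card - (Q.biUnion S).card) :=
  clique_count_decomposition_general G D hdeg W hW hmax S hS
end

section
/- Let y_1, ..., y_k be reals with 1 ≤ y_i ≤ D and ∑ y_i = q, where k ≤ q ≤ kD. Then ∏_{i=1}^k (2^{-y_i/D} + 1) ≤ (2^{-1/D} + 1)^a · (3/2)^b, where a = (kD - q)/(D-1) and b = (q-k)/(D-1), assuming D > 1. -/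
open SimpleGraph

/-!
The map `s ↦ log (2 ^ s + 1)` is convex, so on the segment from `s = -1/D` to `s = -1` each factor
`2 ^ (-y/D) + 1` is at most the weighted geometric mean of its values at the endpoints
`y = 1` and `y = D`, with weights `(D - y)/(D - 1)` and `(y - 1)/(D - 1)`. Multiplying over `i`,
the weights add up to the exponents `(kD - q)/(D - 1)` and `(q - k)/(D - 1)`.
-/

open Finset

/-- Hölder's inequality for two-term sums. -/
theorem Real.rpow_mul_rpow_add_one_le {x z a b : ℝ} (hx : 0 ≤ x) (hz : 0 ≤ z) (ha : 0 ≤ a)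
    (hb : 0 ≤ b) (hab : a + b = 1) :
    x ^ a * z ^ b + 1 ≤ (x + 1) ^ a * (z + 1) ^ b := by
  have hx1 : 0 < x + 1 := by linarith
  have hz1 : 0 < z + 1 := by linarith
  -- weighted AM-GM applied to `x/(x+1), z/(z+1)` and to `1/(x+1), 1/(z+1)`, then summed
  have amgm_main := Real.geom_mean_le_arith_mean2_weighted ha hb
    (div_nonneg hx hx1.le) (div_nonneg hz hz1.le) hab
  have amgm_rest := Real.geom_mean_le_arith_mean2_weighted ha hb
    (one_div_pos.2 hx1).le (one_div_pos.2 hz1).le hab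
  rw [Real.div_rpow hx hx1.le, Real.div_rpow hz hz1.le] at amgm_main
  rw [Real.div_rpow zero_le_one hx1.le, Real.div_rpow zero_le_one hz1.le,
    Real.one_rpow, Real.one_rpow] at amgm_rest
  have hxa : 0 < (x + 1) ^ a := Real.rpow_pos_of_pos hx1 a
  have hzb : 0 < (z + 1) ^ b := Real.rpow_pos_of_pos hz1 b
  rw [← div_le_one (mul_pos hxa hzb)]
  calc (x ^ a * z ^ b + 1) / ((x + 1) ^ a * (z + 1) ^ b)
      = x ^ a / (x + 1) ^ a * (z ^ b / (z + 1) ^ b)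
        + 1 / (x + 1) ^ a * (1 / (z + 1) ^ b) := by field_simp
    _ ≤ (a * (x / (x + 1)) + b * (z / (z + 1))) + (a * (1 / (x + 1)) + b * (1 / (z + 1))) :=
        add_le_add amgm_main amgm_rest
    _ = 1 := by field_simp; linear_combination (x + 1) * (z + 1) * hab

theorem two_rpow_neg_div_add_one_le {D y : ℝ} (hD : 1 < D) (hy1 : 1 ≤ y) (hyD : y ≤ D) :
    (2 : ℝ) ^ (-y / D) + 1 ≤
      ((2 : ℝ) ^ (-1 / D) + 1) ^ ((D - y) / (D - 1)) * (3 / 2 : ℝ) ^ ((y - 1) / (D - 1)) := by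
  have hD1 : 0 < D - 1 := by linarith
  have hinterp : ((2 : ℝ) ^ (-1 / D)) ^ ((D - y) / (D - 1)) * (1 / 2 : ℝ) ^ ((y - 1) / (D - 1))
      = (2 : ℝ) ^ (-y / D) := by
    rw [one_div, ← Real.rpow_neg_one, ← Real.rpow_mul zero_le_two, ← Real.rpow_mul zero_le_two,
      ← Real.rpow_add two_pos]
    congr 1
    field_simp
    ring
  have key := Real.rpow_mul_rpow_add_one_le (Real.rpow_nonneg zero_le_two (-1 / D))
    (by norm_num : (0 : ℝ) ≤ 1 / 2) (a := (D - y) / (D - 1)) (b := (y - 1) / (D - 1))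
    (div_nonneg (by linarith) hD1.le) (div_nonneg (by linarith) hD1.le) (by field_simp; ring)
  rwa [hinterp, show (1 / 2 : ℝ) + 1 = 3 / 2 by norm_num] at key

theorem product_convexity_bound_general (k : ℕ) (D q : ℝ) (hD : 1 < D) (y : Fin k → ℝ)
    (hy : ∀ i, 1 ≤ y i ∧ y i ≤ D) (hsum : ∑ i, y i = q) :
    ∏ i, ((2 : ℝ) ^ (-(y i) / D) + 1) ≤
      ((2 : ℝ) ^ (-(1 : ℝ) / D) + 1) ^ ((k * D - q) / (D - 1)) *
        ((3 : ℝ) / 2) ^ ((q - k) / (D - 1)) := by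
  have hA : 0 < (2 : ℝ) ^ (-(1 : ℝ) / D) + 1 := by positivity
  have hweights₁ : ∑ i, (D - y i) / (D - 1) = (k * D - q) / (D - 1) := by
    simp [← sum_div, sum_sub_distrib, hsum]
  have hweights₂ : ∑ i, (y i - 1) / (D - 1) = (q - k) / (D - 1) := by
    simp [← sum_div, sum_sub_distrib, hsum]
  calc ∏ i, ((2 : ℝ) ^ (-(y i) / D) + 1)
      ≤ ∏ i, ((2 : ℝ) ^ (-(1 : ℝ) / D) + 1) ^ ((D - y i) / (D - 1)) *
          (3 / 2 : ℝ) ^ ((y i - 1) / (D - 1)) :=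
        prod_le_prod (fun i _ => by positivity)
          (fun i _ => two_rpow_neg_div_add_one_le hD (hy i).1 (hy i).2)
    _ = _ := by
        rw [prod_mul_distrib, ← Real.rpow_sum_of_pos hA, ← Real.rpow_sum_of_pos (by norm_num),
          hweights₁, hweights₂]

theorem product_convexity_bound (k : ℕ) (D q : ℝ) (hD : 1 < D) (y : Fin k → ℝ)
    (hy : ∀ i, 1 ≤ y i ∧ y i ≤ D) (hsum : ∑ i, y i = q)
    (hq1 : (k : ℝ) ≤ q) (hq2 : q ≤ k * D) :
    ∏ i, ((2 : ℝ) ^ (-(y i) / D) + 1) ≤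
      ((2 : ℝ) ^ (-(1 : ℝ) / D) + 1) ^ ((k * D - q) / (D - 1)) *
        ((3 : ℝ) / 2) ^ ((q - k) / (D - 1)) :=
  product_convexity_bound_general k D q hD y hy hsum
end
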